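/- arXiv:2101.04246 — 6 statements merged into one kernel-verified Lean document; each statement's English description precedes it below -/
import Mathlib

section
/- Let ℓ ≥ 1 and let G : H^ℓ → H be a continuous ℓ-multilinear map that is Hilbert–Schmidt, i.e., S := ∑_{(i₁,…,i_ℓ)∈ℕ^ℓ} ‖G(e_{i₁},…,e_{i_ℓ})‖² < ∞. Then the (ℓ+1)-multilinear map (k₁,…,k_{ℓ+1}) ↦ [G(k₁,…,k_ℓ), k_{ℓ+1}] is Hilbert–Schmidt, with ∑_{(i₁,…,i_{ℓ+1})∈ℕ^{ℓ+1}} ‖[G(e_{i₁},…,e_{i_ℓ}), e_{i_{ℓ+1}}]‖² ≤ ‖[·,·]‖₂² · S. -/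
/-- Cauchy–Schwarz for tsums of nonnegative reals. -/
lemma tsum_mul_sq_le {f g : ℕ → ℝ} (hf0 : ∀ i, 0 ≤ f i) (hg0 : ∀ i, 0 ≤ g i)
    (hf : Summable fun i => f i ^ 2) (hg : Summable fun i => g i ^ 2) :
    (∑' i, f i * g i) ^ 2 ≤ (∑' i, f i ^ 2) * ∑' i, g i ^ 2 := by
  have hfg : Summable fun i => f i * g i := by
    refine Summable.of_nonneg_of_le (fun i => mul_nonneg (hf0 i) (hg0 i)) (fun i => ?_)
      (((hf.add hg).div_const 2))
    have := two_mul_le_add_sq (f i) (g i)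
    linarith
  have h1 : ∑' i, f i * g i ≤
      Real.sqrt (∑' i, f i ^ 2) * Real.sqrt (∑' i, g i ^ 2) := by
    refine hfg.tsum_le_of_sum_le (fun s => ?_)
    refine le_trans (Real.sum_mul_le_sqrt_mul_sqrt s f g) ?_
    gcongr
    · exact hf.sum_le_tsum s (fun i _ => sq_nonneg _)
    · exact hg.sum_le_tsum s (fun i _ => sq_nonneg _)
  calc (∑' i, f i * g i) ^ 2
      ≤ (Real.sqrt (∑' i, f i ^ 2) * Real.sqrt (∑' i, g i ^ 2)) ^ 2 := by
        have h0 : 0 ≤ ∑' i, f i * g i :=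
          tsum_nonneg fun i => mul_nonneg (hf0 i) (hg0 i)
        exact pow_le_pow_left₀ h0 h1 2
    _ = (∑' i, f i ^ 2) * ∑' i, g i ^ 2 := by
        rw [mul_pow, Real.sq_sqrt (tsum_nonneg fun i => sq_nonneg _),
          Real.sq_sqrt (tsum_nonneg fun i => sq_nonneg _)]

/-- If `G : H^ℓ → H` is a continuous `ℓ`-multilinear Hilbert–Schmidt map on a
real separable Hilbert space `H` whose Lie bracket is continuous bilinear and Hilbert–Schmidt,
then `(k₁,…,k_{ℓ+1}) ↦ [G(k₁,…,k_ℓ), k_{ℓ+1}]` is Hilbert–Schmidt, with Hilbert–Schmidt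
square-sum bounded by `‖[·,·]‖₂² · S`. -/
theorem bracket_comp_hilbertSchmidt
    {H : Type*} [NormedAddCommGroup H] [InnerProductSpace ℝ H] [CompleteSpace H]
    (br : H →ₗ[ℝ] H →ₗ[ℝ] H)
    (hcont : Continuous fun p : H × H => br p.1 p.2)
    (halt : ∀ x : H, br x x = 0)
    (hjac : ∀ x y z : H, br x (br y z) = br (br x y) z + br y (br x z))
    (e : HilbertBasis ℕ ℝ H)
    (hHS : Summable fun p : ℕ × ℕ => ‖br (e p.1) (e p.2)‖ ^ 2)
    (l : ℕ) (hl : 1 ≤ l)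
    (G : ContinuousMultilinearMap ℝ (fun _ : Fin l => H) H)
    (hG : Summable fun v : Fin l → ℕ => ‖G (fun i => e (v i))‖ ^ 2) :
    Summable (fun v : Fin (l + 1) → ℕ =>
        ‖br (G fun i : Fin l => e (v i.castSucc)) (e (v (Fin.last l)))‖ ^ 2) ∧
      ∑' v : Fin (l + 1) → ℕ,
          ‖br (G fun i : Fin l => e (v i.castSucc)) (e (v (Fin.last l)))‖ ^ 2 ≤
        (∑' p : ℕ × ℕ, ‖br (e p.1) (e p.2)‖ ^ 2) *
          ∑' v : Fin l → ℕ, ‖G (fun i => e (v i))‖ ^ 2 := by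
  classical
  set C : ℝ := ∑' p : ℕ × ℕ, ‖br (e p.1) (e p.2)‖ ^ 2 with hC
  set S : ℝ := ∑' v : Fin l → ℕ, ‖G (fun i => e (v i))‖ ^ 2 with hS
  -- swapped summability
  have hHS' : Summable fun p : ℕ × ℕ => ‖br (e p.2) (e p.1)‖ ^ 2 := hHS.prod_symm
  have hslice : ∀ j : ℕ, Summable fun i => ‖br (e i) (e j)‖ ^ 2 := fun j =>
    hHS'.prod_factor j
  set B : ℕ → ℝ := fun j => ∑' i, ‖br (e i) (e j)‖ ^ 2 with hBdef
  have hB0 : ∀ j, 0 ≤ B j := fun j => tsum_nonneg fun i => sq_nonneg _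
  have hB : Summable B := by
    have := (summable_prod_of_nonneg
      (f := fun p : ℕ × ℕ => ‖br (e p.2) (e p.1)‖ ^ 2) (fun p => sq_nonneg _)).1 hHS'
    exact this.2
  have hBsum : ∑' j, B j = C := by
    have h1 : ∑' p : ℕ × ℕ, ‖br (e p.2) (e p.1)‖ ^ 2
        = ∑' (j : ℕ) (i : ℕ), ‖br (e i) (e j)‖ ^ 2 :=
      hHS'.tsum_prod' (fun j => hslice j)
    have h2 : ∑' p : ℕ × ℕ, ‖br (e p.2) (e p.1)‖ ^ 2 = C := by
      rw [hC, ← (Equiv.prodComm ℕ ℕ).tsum_eq (fun p : ℕ × ℕ => ‖br (e p.1) (e p.2)‖ ^ 2)]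
      rfl
    rw [← h2, h1]
  -- continuous linear maps x ↦ br x (e j)
  have Tcont : ∀ j : ℕ, Continuous fun x : H => br x (e j) := fun j =>
    hcont.comp (continuous_id.prodMk continuous_const)
  set T : ℕ → H →L[ℝ] H := fun j => ⟨br.flip (e j), Tcont j⟩ with hT
  -- key pointwise bound
  have key : ∀ (x : H) (j : ℕ), ‖br x (e j)‖ ^ 2 ≤ ‖x‖ ^ 2 * B j := by
    intro x j
    set c : ℕ → ℝ := fun i => e.repr x i with hc
    have hc2 : Summable fun i => ‖c i‖ ^ 2 := by
      have := e.summable_inner_mul_inner x x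
      refine this.congr fun i => ?_
      rw [← e.repr_apply_apply, real_inner_comm, ← e.repr_apply_apply]
      simp [hc, sq_abs, sq]
    have hc2sum : ∑' i, ‖c i‖ ^ 2 = ‖x‖ ^ 2 := by
      have h := e.tsum_inner_mul_inner x x
      have h2 : ∑' i, ‖c i‖ ^ 2 = ∑' i, (inner ℝ x (e i) : ℝ) * inner ℝ (e i) x := by
        refine tsum_congr fun i => ?_
        rw [← e.repr_apply_apply, real_inner_comm, ← e.repr_apply_apply]
        simp [hc, sq_abs, sq]
      rw [h2, h, real_inner_self_eq_norm_sq]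
    have hsum1 : HasSum (fun i => c i • br (e i) (e j)) (br x (e j)) := by
      have := (T j).hasSum (e.hasSum_repr x)
      simp only [map_smul] at this
      exact this
    have hnorm : Summable fun i => ‖c i‖ * ‖br (e i) (e j)‖ := by
      refine Summable.of_nonneg_of_le (fun i => mul_nonneg (norm_nonneg _) (norm_nonneg _))
        (fun i => ?_) ((hc2.add (hslice j)).div_const 2)
      have := two_mul_le_add_sq ‖c i‖ ‖br (e i) (e j)‖
      linarith
    have hle : ‖br x (e j)‖ ≤ ∑' i, ‖c i‖ * ‖br (e i) (e j)‖ := by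
      have hsn : Summable fun i => ‖c i • br (e i) (e j)‖ := by
        simpa [norm_smul] using hnorm
      calc ‖br x (e j)‖ = ‖∑' i, c i • br (e i) (e j)‖ := by rw [hsum1.tsum_eq]
        _ ≤ ∑' i, ‖c i • br (e i) (e j)‖ := norm_tsum_le_tsum_norm hsn
        _ = ∑' i, ‖c i‖ * ‖br (e i) (e j)‖ := by
            refine tsum_congr fun i => ?_; rw [norm_smul]
    calc ‖br x (e j)‖ ^ 2 ≤ (∑' i, ‖c i‖ * ‖br (e i) (e j)‖) ^ 2 :=
          pow_le_pow_left₀ (norm_nonneg _) hle 2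
      _ ≤ (∑' i, ‖c i‖ ^ 2) * ∑' i, ‖br (e i) (e j)‖ ^ 2 := by
          refine tsum_mul_sq_le (fun i => norm_nonneg _) (fun i => norm_nonneg _) ?_ (hslice j)
          · exact hc2
      _ = ‖x‖ ^ 2 * B j := by rw [hc2sum]
  -- sum over j for fixed x
  have keysum : ∀ x : H, Summable (fun j => ‖br x (e j)‖ ^ 2) ∧
      ∑' j, ‖br x (e j)‖ ^ 2 ≤ ‖x‖ ^ 2 * C := by
    intro x
    have hsum : Summable fun j => ‖br x (e j)‖ ^ 2 :=
      Summable.of_nonneg_of_le (fun j => sq_nonneg _) (fun j => key x j) (hB.mul_left _)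
    refine ⟨hsum, ?_⟩
    calc ∑' j, ‖br x (e j)‖ ^ 2 ≤ ∑' j, ‖x‖ ^ 2 * B j :=
          hsum.tsum_le_tsum (fun j => key x j) (hB.mul_left _)
      _ = ‖x‖ ^ 2 * ∑' j, B j := tsum_mul_left
      _ = ‖x‖ ^ 2 * C := by rw [hBsum]
  -- the product-indexed function
  set F : (Fin l → ℕ) × ℕ → ℝ :=
    fun p => ‖br (G fun i => e (p.1 i)) (e p.2)‖ ^ 2 with hF
  have hF0 : ∀ p, 0 ≤ F p := fun p => sq_nonneg _
  have hFslice : ∀ w : Fin l → ℕ, Summable fun j => F (w, j) := fun w =>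
    (keysum (G fun i => e (w i))).1
  have hFrow : Summable fun w : Fin l → ℕ => ∑' j, F (w, j) := by
    refine Summable.of_nonneg_of_le (fun w => tsum_nonneg fun j => hF0 _)
      (fun w => ?_) (hG.mul_right C)
    exact (keysum (G fun i => e (w i))).2
  have hFsummable : Summable F :=
    (summable_prod_of_nonneg hF0).2 ⟨hFslice, hFrow⟩
  have hFtsum : ∑' p, F p ≤ C * S := by
    have h1 : ∑' p, F p = ∑' w, ∑' j, F (w, j) := hFsummable.tsum_prod' hFslice
    have hCnn : 0 ≤ C := tsum_nonneg fun p => sq_nonneg _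
    calc ∑' p, F p = ∑' w, ∑' j, F (w, j) := h1
      _ ≤ ∑' w : Fin l → ℕ, ‖G (fun i => e (w i))‖ ^ 2 * C :=
          hFrow.tsum_le_tsum (fun w => (keysum (G fun i => e (w i))).2) (hG.mul_right C)
      _ = S * C := tsum_mul_right
      _ = C * S := mul_comm _ _
  -- transport along the equivalence
  set ε : (Fin (l + 1) → ℕ) ≃ ((Fin l → ℕ) × ℕ) :=
    ((Fin.insertNthEquiv (fun _ => ℕ) (Fin.last l)).symm).trans (Equiv.prodComm _ _) with hε
  have hcomp : ∀ v : Fin (l + 1) → ℕ,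
      F (ε v) = ‖br (G fun i : Fin l => e (v i.castSucc)) (e (v (Fin.last l)))‖ ^ 2 := by
    intro v
    simp [hε, hF, Fin.removeNth, Fin.succAbove_last, Fin.init]
  constructor
  · have := hFsummable.comp_injective ε.injective
    refine this.congr fun v => ?_
    simpa using hcomp v
  · have heq : ∑' v : Fin (l + 1) → ℕ,
        ‖br (G fun i : Fin l => e (v i.castSucc)) (e (v (Fin.last l)))‖ ^ 2 = ∑' p, F p := by
      rw [← ε.tsum_eq F]
      exact tsum_congr fun v => (hcomp v).symm
    rw [heq]
    exact hFtsum
end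

section
/- Define k := −(1/2)·sup{ ∑_{i∈ℕ} ‖[e_i, X]‖² : X ∈ H, ‖X‖ = 1 }. Then k ≥ −(1/2)‖[·,·]‖₂² > −∞, and for every finite-dimensional subspace S ⊆ H that is closed under the Lie bracket (a finite-dimensional Lie subalgebra), every orthonormal basis Γ of S, and every X ∈ S, one has (1/4)·∑_{Y∈Γ} ‖(ad_Y|_S)^* X‖² − (1/2)·∑_{Y∈Γ} ‖[Y,X]‖² ≥ k‖X‖², where ad_Y|_S : S → S is Z ↦ [Y,Z] and ^* denotes the adjoint with respect to the inner product of S. (The left-hand side is the Ricci quadratic form ⟨Ric^S X, X⟩ of the left-invariant metric on the nilpotent Lie group corresponding to S.) -/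
open scoped RealInnerProductSpace

section Aux

variable {H : Type*} [NormedAddCommGroup H] [InnerProductSpace ℝ H]

lemma parseval_sq (e : HilbertBasis ℕ ℝ H) (y : H) :
    ∑' j, ⟪e j, y⟫ ^ 2 = ‖y‖ ^ 2 := by
  have h := e.tsum_inner_mul_inner y y
  have h2 : ∀ j : ℕ, ⟪y, e j⟫ * ⟪e j, y⟫ = ⟪e j, y⟫ ^ 2 := fun j => by
    rw [real_inner_comm y (e j)]; ring
  rw [tsum_congr h2] at h
  rw [h, real_inner_self_eq_norm_sq]

lemma parseval_summable (e : HilbertBasis ℕ ℝ H) (y : H) :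
    Summable fun j => ⟪e j, y⟫ ^ 2 := by
  have h := e.orthonormal.inner_products_summable (x := y)
  simpa [Real.norm_eq_abs, sq_abs] using h

lemma op_sq_bound (e : HilbertBasis ℕ ℝ H) (T : H →L[ℝ] H) (C : ℝ) (hC0 : 0 ≤ C)
    (hC : ∀ s : Finset ℕ, ∑ j ∈ s, ‖T (e j)‖ ^ 2 ≤ C) (x : H) :
    ‖T x‖ ^ 2 ≤ C * ‖x‖ ^ 2 := by
  have hsum : HasSum (fun j => e.repr x j • T (e j)) (T x) := by
    simpa using (e.hasSum_repr x).mapL T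
  have hbound : ∀ s : Finset ℕ, ‖∑ j ∈ s, e.repr x j • T (e j)‖ ≤ Real.sqrt C * ‖x‖ := by
    intro s
    have hcs : (∑ j ∈ s, |e.repr x j| * ‖T (e j)‖) ^ 2 ≤
        (∑ j ∈ s, |e.repr x j| ^ 2) * ∑ j ∈ s, ‖T (e j)‖ ^ 2 := by
      simpa using Finset.sum_mul_sq_le_sq_mul_sq s (fun j => |e.repr x j|) (fun j => ‖T (e j)‖)
    have hb : ∑ j ∈ s, |e.repr x j| ^ 2 ≤ ‖x‖ ^ 2 := by
      have := e.orthonormal.sum_inner_products_le (s := s) (x := x)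
      simpa [Real.norm_eq_abs, e.repr_apply_apply] using this
    have h1 : ∑ j ∈ s, |e.repr x j| * ‖T (e j)‖ ≤ Real.sqrt C * ‖x‖ := by
      have h0 : 0 ≤ ∑ j ∈ s, |e.repr x j| * ‖T (e j)‖ :=
        Finset.sum_nonneg fun j _ => mul_nonneg (abs_nonneg _) (norm_nonneg _)
      have hle : (∑ j ∈ s, |e.repr x j| * ‖T (e j)‖) ^ 2 ≤ ‖x‖ ^ 2 * C := by
        calc (∑ j ∈ s, |e.repr x j| * ‖T (e j)‖) ^ 2
            ≤ (∑ j ∈ s, |e.repr x j| ^ 2) * ∑ j ∈ s, ‖T (e j)‖ ^ 2 := hcs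
          _ ≤ ‖x‖ ^ 2 * C := by
              have h2 : 0 ≤ ∑ j ∈ s, ‖T (e j)‖ ^ 2 :=
                Finset.sum_nonneg fun j _ => sq_nonneg _
              have h3 : 0 ≤ ∑ j ∈ s, |e.repr x j| ^ 2 :=
                Finset.sum_nonneg fun j _ => sq_nonneg _
              exact mul_le_mul hb (hC s) h2 (sq_nonneg _)
      nlinarith [Real.sq_sqrt hC0, Real.sqrt_nonneg C, norm_nonneg x,
        mul_nonneg (Real.sqrt_nonneg C) (norm_nonneg x)]
    calc ‖∑ j ∈ s, e.repr x j • T (e j)‖ ≤ ∑ j ∈ s, ‖e.repr x j • T (e j)‖ :=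
          norm_sum_le _ _
      _ = ∑ j ∈ s, |e.repr x j| * ‖T (e j)‖ := by
          simp [norm_smul, Real.norm_eq_abs]
      _ ≤ Real.sqrt C * ‖x‖ := h1
  have ht : Filter.Tendsto (fun s : Finset ℕ => ∑ j ∈ s, e.repr x j • T (e j))
      Filter.atTop (nhds (T x)) := hsum
  have hlim : ‖T x‖ ≤ Real.sqrt C * ‖x‖ :=
    le_of_tendsto ht.norm (Filter.Eventually.of_forall hbound)
  have := pow_le_pow_left₀ (norm_nonneg (T x)) hlim 2
  rw [mul_pow, Real.sq_sqrt hC0] at this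
  exact this


lemma sum_family_le [CompleteSpace H] (e : HilbertBasis ℕ ℝ H) (T : H →L[ℝ] H)
    (hT : Summable fun i => ‖T (e i)‖ ^ 2)
    {N : ℕ} (v : Fin N → H) (hv : Orthonormal ℝ v) :
    ∑ i : Fin N, ‖T (v i)‖ ^ 2 ≤ ∑' i, ‖T (e i)‖ ^ 2 := by
  classical
  set A := ContinuousLinearMap.adjoint T with hA
  set g : ℕ × ℕ → ℝ := fun p => ⟪e p.2, T (e p.1)⟫ ^ 2 with hg
  have hg0 : ∀ p, 0 ≤ g p := fun p => sq_nonneg _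
  have hgslice : ∀ i, Summable fun j => g (i, j) := fun i => parseval_summable e (T (e i))
  have hgtsum : ∀ i, ∑' j, g (i, j) = ‖T (e i)‖ ^ 2 := fun i => parseval_sq e (T (e i))
  have hgsum : Summable g := by
    rw [summable_prod_of_nonneg hg0]
    exact ⟨hgslice, by simpa [hgtsum] using hT⟩
  have hswap := (summable_prod_of_nonneg (f := fun p : ℕ × ℕ => g p.swap)
    (fun p => hg0 p.swap)).mp hgsum.prod_symm
  have hgcol : ∀ j, Summable fun i => g (i, j) := fun j => hswap.1 j
  have hAinner : ∀ i j, ⟪e i, A (e j)⟫ = ⟪e j, T (e i)⟫ := by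
    intro i j
    rw [hA, ContinuousLinearMap.adjoint_inner_right, real_inner_comm]
  have hAcol : ∀ j, ‖A (e j)‖ ^ 2 = ∑' i, g (i, j) := by
    intro j
    rw [← parseval_sq e (A (e j))]
    exact tsum_congr fun i => by rw [hAinner i j]
  have hAsum : Summable fun j => ‖A (e j)‖ ^ 2 := by
    have h2 := hswap.2
    refine h2.congr fun j => ?_
    rw [hAcol]
    rfl
  have hAtsum : ∑' j, ‖A (e j)‖ ^ 2 = ∑' i, ‖T (e i)‖ ^ 2 := by
    calc ∑' j, ‖A (e j)‖ ^ 2 = ∑' j, ∑' i, g (i, j) := tsum_congr hAcol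
      _ = ∑' i, ∑' j, g (i, j) := Summable.tsum_comm' hgsum hgslice hgcol
      _ = ∑' i, ‖T (e i)‖ ^ 2 := tsum_congr hgtsum
  have hvinner : ∀ (i : Fin N) (j : ℕ), ⟪e j, T (v i)⟫ = ⟪v i, A (e j)⟫ := by
    intro i j
    rw [hA, ContinuousLinearMap.adjoint_inner_right, real_inner_comm]
  have hrow : ∀ i : Fin N, Summable fun j => ⟪v i, A (e j)⟫ ^ 2 := by
    intro i
    exact (parseval_summable e (T (v i))).congr fun j => by rw [hvinner i j]
  calc ∑ i : Fin N, ‖T (v i)‖ ^ 2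
      = ∑ i : Fin N, ∑' j, ⟪v i, A (e j)⟫ ^ 2 := by
        refine Finset.sum_congr rfl fun i _ => ?_
        rw [← parseval_sq e (T (v i))]
        exact tsum_congr fun j => by rw [hvinner i j]
    _ = ∑' j, ∑ i : Fin N, ⟪v i, A (e j)⟫ ^ 2 :=
        (Summable.tsum_finsetSum fun i _ => hrow i).symm
    _ ≤ ∑' j, ‖A (e j)‖ ^ 2 := by
        refine Summable.tsum_le_tsum (fun j => ?_) (summable_sum fun i _ => hrow i) hAsum
        have := hv.sum_inner_products_le (s := Finset.univ) (x := A (e j))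
        simpa [Real.norm_eq_abs, sq_abs] using this
    _ = ∑' i, ‖T (e i)‖ ^ 2 := hAtsum

end Aux

/-- With `k := -(1/2)·sup{∑_i ‖[e_i,X]‖² : ‖X‖ = 1}`, one has
`k ≥ -(1/2)‖[·,·]‖₂²`, and for every finite-dimensional Lie subalgebra `S` of `H`, every
orthonormal basis `Γ = (b i)` of `S`, and every `X ∈ S`, the Ricci quadratic form
`(1/4)∑_Y ‖(ad_Y|_S)* X‖² - (1/2)∑_Y ‖[Y,X]‖²` is bounded below by `k‖X‖²`. -/
theorem ricci_uniform_lower_bound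
    {H : Type*} [NormedAddCommGroup H] [InnerProductSpace ℝ H] [CompleteSpace H]
    (br : H →ₗ[ℝ] H →ₗ[ℝ] H)
    (hcont : Continuous fun p : H × H => br p.1 p.2)
    (halt : ∀ x : H, br x x = 0)
    (hjac : ∀ x y z : H, br x (br y z) = br (br x y) z + br y (br x z))
    (e : HilbertBasis ℕ ℝ H)
    (hHS : Summable fun p : ℕ × ℕ => ‖br (e p.1) (e p.2)‖ ^ 2) :
    let k : ℝ := -(1 / 2) * sSup {c : ℝ | ∃ X : H, ‖X‖ = 1 ∧ c = ∑' i : ℕ, ‖br (e i) X‖ ^ 2}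
    k ≥ -(1 / 2) * (∑' p : ℕ × ℕ, ‖br (e p.1) (e p.2)‖ ^ 2) ∧
      ∀ (S : Submodule ℝ H) [FiniteDimensional ℝ S],
        (∀ x y : H, x ∈ S → y ∈ S → br x y ∈ S) →
        ∀ (N : ℕ) (b : OrthonormalBasis (Fin N) ℝ S) (A : Fin N → (S →L[ℝ] S)),
          (∀ (i : Fin N) (z : S), ((A i z : S) : H) = br ((b i : S) : H) ((z : S) : H)) →
          ∀ X : S,
            (1 / 4) * (∑ i : Fin N, ‖(ContinuousLinearMap.adjoint (A i)) X‖ ^ 2) -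
                (1 / 2) * (∑ i : Fin N, ‖br ((b i : S) : H) ((X : S) : H)‖ ^ 2) ≥
              k * ‖X‖ ^ 2 := by
  classical
  intro k
  set C : ℝ := ∑' p : ℕ × ℕ, ‖br (e p.1) (e p.2)‖ ^ 2 with hCdef
  -- continuous linear maps obtained by freezing one argument of the bracket
  have hcl : ∀ y : H, Continuous fun z : H => br y z := fun y =>
    hcont.comp (Continuous.prodMk_right y)
  have hcr : ∀ x : H, Continuous fun z : H => br z x := fun x =>
    hcont.comp (continuous_id.prodMk continuous_const)
  let Tl : H → (H →L[ℝ] H) := fun y => ⟨br y, hcl y⟩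
  let Tr : H → (H →L[ℝ] H) := fun x => ⟨br.flip x, hcr x⟩
  have hHS0 : ∀ p : ℕ × ℕ, 0 ≤ ‖br (e p.1) (e p.2)‖ ^ 2 := fun _ => sq_nonneg _
  have hslice : ∀ i, Summable fun j => ‖br (e i) (e j)‖ ^ 2 := fun i => hHS.prod_factor i
  set c : ℕ → ℝ := fun i => ∑' j, ‖br (e i) (e j)‖ ^ 2 with hcdef
  have hc_sum : Summable c := ((summable_prod_of_nonneg hHS0).mp hHS).2
  have hc_tsum : ∑' i, c i = C := (Summable.tsum_prod' hHS hslice).symm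
  have hc0 : ∀ i, 0 ≤ c i := fun i => tsum_nonneg fun _ => sq_nonneg _
  have hpt : ∀ (i : ℕ) (x : H), ‖br (e i) x‖ ^ 2 ≤ c i * ‖x‖ ^ 2 := by
    intro i x
    refine op_sq_bound e (Tl (e i)) (c i) (hc0 i) (fun s => ?_) x
    exact Summable.sum_le_tsum s (fun j _ => sq_nonneg _) (hslice i)
  have hQsummable : ∀ x : H, Summable fun i => ‖br (e i) x‖ ^ 2 := fun x =>
    Summable.of_nonneg_of_le (fun i => sq_nonneg _) (fun i => hpt i x) (hc_sum.mul_right _)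
  set Q : H → ℝ := fun x => ∑' i, ‖br (e i) x‖ ^ 2 with hQdef
  have hQ0 : ∀ x, 0 ≤ Q x := fun x => tsum_nonneg fun _ => sq_nonneg _
  have hQC : ∀ x, Q x ≤ C * ‖x‖ ^ 2 := by
    intro x
    calc Q x ≤ ∑' i, c i * ‖x‖ ^ 2 :=
          Summable.tsum_le_tsum (fun i => hpt i x) (hQsummable x) (hc_sum.mul_right _)
      _ = (∑' i, c i) * ‖x‖ ^ 2 := by rw [tsum_mul_right]
      _ = C * ‖x‖ ^ 2 := by rw [hc_tsum]
  set s : Set ℝ := {c : ℝ | ∃ X : H, ‖X‖ = 1 ∧ c = ∑' i : ℕ, ‖br (e i) X‖ ^ 2} with hsdef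
  have he0 : ‖e 0‖ = 1 := e.orthonormal.1 0
  have hs_ne : s.Nonempty := ⟨Q (e 0), e 0, he0, rfl⟩
  have hs_bdd : BddAbove s := by
    refine ⟨C, fun d hd => ?_⟩
    obtain ⟨X, hX, rfl⟩ := hd
    have := hQC X
    rw [hX] at this
    simpa using this
  set M : ℝ := sSup s with hMdef
  have hk : k = -(1 / 2) * M := rfl
  have hMC : M ≤ C := by
    refine csSup_le hs_ne fun d hd => ?_
    obtain ⟨X, hX, rfl⟩ := hd
    have := hQC X
    rw [hX] at this
    simpa using this
  have hQM : ∀ x : H, Q x ≤ M * ‖x‖ ^ 2 := by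
    intro x
    rcases eq_or_ne x 0 with rfl | hx
    · have hM0 : 0 ≤ M := le_trans (hQ0 (e 0)) (le_csSup hs_bdd ⟨e 0, he0, rfl⟩)
      have : Q 0 = 0 := by simp [hQdef]
      rw [this]
      positivity
    · have hxn : ‖x‖ ≠ 0 := norm_ne_zero_iff.mpr hx
      set u : H := ‖x‖⁻¹ • x with hudef
      have hu : ‖u‖ = 1 := by
        rw [hudef, norm_smul, Real.norm_eq_abs, abs_inv, abs_norm, inv_mul_cancel₀ hxn]
      have hQu : Q u ≤ M := le_csSup hs_bdd ⟨u, hu, rfl⟩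
      have hux : x = ‖x‖ • u := by
        rw [hudef, smul_smul, mul_inv_cancel₀ hxn, one_smul]
      have hQx : Q x = ‖x‖ ^ 2 * Q u := by
        calc Q x = ∑' i, ‖br (e i) (‖x‖ • u)‖ ^ 2 := by rw [← hux]
          _ = ∑' i, ‖x‖ ^ 2 * ‖br (e i) u‖ ^ 2 := by
              refine tsum_congr fun i => ?_
              rw [map_smul, norm_smul, Real.norm_eq_abs, abs_norm, mul_pow]
          _ = ‖x‖ ^ 2 * Q u := tsum_mul_left
      rw [hQx, mul_comm M _]
      exact mul_le_mul_of_nonneg_left hQu (sq_nonneg _)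
  constructor
  · rw [hk]
    linarith
  · intro S _ _ N b A _ X
    set x : H := (X : H) with hxdef
    have hXx : ‖X‖ = ‖x‖ := rfl
    set v : Fin N → H := fun i => ((b i : S) : H) with hvdef
    have hv : Orthonormal ℝ v := b.orthonormal.comp_linearIsometry S.subtypeₗᵢ
    have hTsum : Summable fun i => ‖(Tr x) (e i)‖ ^ 2 := hQsummable x
    have hb1 : ∑ i : Fin N, ‖br (v i) x‖ ^ 2 ≤ Q x := by
      have h := sum_family_le e (Tr x) hTsum v hv
      exact h
    have hb2 : ∑ i : Fin N, ‖br (v i) x‖ ^ 2 ≤ M * ‖x‖ ^ 2 := hb1.trans (hQM x)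
    have hadj : 0 ≤ ∑ i : Fin N, ‖(ContinuousLinearMap.adjoint (A i)) X‖ ^ 2 :=
      Finset.sum_nonneg fun i _ => sq_nonneg _
    rw [hk, ge_iff_le, hXx]
    have : ∑ i : Fin N, ‖br ((b i : S) : H) ((X : S) : H)‖ ^ 2
        = ∑ i : Fin N, ‖br (v i) x‖ ^ 2 := rfl
    rw [this]
    linarith
end

section
/- Let 𝔤 be a nilpotent Lie algebra over ℝ and let V ⊆ 𝔤 be a finite-dimensional linear subspace. Then the Lie subalgebra of 𝔤 generated by V is finite-dimensional. -/
open Submodule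

/-- In a nilpotent Lie algebra over `ℝ`, the Lie subalgebra generated by a
finite-dimensional linear subspace is finite-dimensional. -/
theorem lieSpan_finiteDimensional_of_nilpotent
    {L : Type*} [LieRing L] [LieAlgebra ℝ L] (r : ℕ)
    (hnil : LieModule.lowerCentralSeries ℝ L L r = ⊥)
    (V : Submodule ℝ L) [FiniteDimensional ℝ V] :
    FiniteDimensional ℝ (LieSubalgebra.lieSpan ℝ L (V : Set L)) := by
  set B : L →ₗ[ℝ] L →ₗ[ℝ] L := LinearMap.mk₂ ℝ (fun x y => ⁅x, y⁆) add_lie smul_lie lie_add lie_smul with hB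
  have hBapp : ∀ x y : L, B x y = ⁅x, y⁆ := fun x y => rfl
  -- the chain of "left-normed brackets"
  set T : ℕ → Submodule ℝ L := fun n => Nat.rec V (fun _ p => map₂ B V p) n with hT
  have hT0 : T 0 = V := rfl
  have hTsucc : ∀ n, T (n + 1) = map₂ B V (T n) := fun n => rfl
  set M : Submodule ℝ L := ⨆ n, T n with hM
  have hTM : ∀ n, T n ≤ M := fun n => le_iSup T n
  -- V brackets M into M
  have hVM : ∀ x ∈ V, ∀ w ∈ M, ⁅x, w⁆ ∈ M := by
    intro x hx w hw
    have : map₂ B V M ≤ M := by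
      rw [hM, map₂_iSup_right]
      exact iSup_le fun n => (hTsucc n ▸ (le_iSup T (n + 1)) : map₂ B V (T n) ≤ M)
    exact this (apply_mem_map₂ B hx hw)
  -- M is closed under brackets among the T's (Jacobi induction)
  have key : ∀ a b, map₂ B (T a) (T b) ≤ M := by
    intro a
    induction a with
    | zero => intro b; rw [hT0, ← hTsucc b]; exact hTM (b + 1)
    | succ a ih =>
      intro b
      rw [hTsucc a, map₂_le]
      intro z hz y hy
      have hmem : z ∈ comap (B.flip y) M := by
        revert z
        rw [← SetLike.le_def, map₂_le]
        intro x hx m hm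
        simp only [mem_comap, LinearMap.flip_apply, hBapp]
        have h1 : ⁅x, ⁅m, y⁆⁆ ∈ M := hVM x hx _ (ih b (apply_mem_map₂ B hm hy))
        have h2 : ⁅m, ⁅x, y⁆⁆ ∈ M :=
          ih (b + 1) (apply_mem_map₂ B hm (hTsucc b ▸ apply_mem_map₂ B hx hy))
        rw [lie_lie]
        exact M.sub_mem h1 h2
      simpa using hmem
  have hMM : ∀ x ∈ M, ∀ y ∈ M, ⁅x, y⁆ ∈ M := by
    intro x hx y hy
    have : map₂ B M M ≤ M := by
      rw [hM, map₂_iSup_left]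
      refine iSup_le fun a => ?_
      rw [map₂_iSup_right]
      exact iSup_le fun b => key a b
    exact this (apply_mem_map₂ B hx hy)
  -- T n lands in the lower central series
  have hTlcs : ∀ n, T n ≤ (LieModule.lowerCentralSeries ℝ L L n).toSubmodule := by
    intro n
    induction n with
    | zero => simp [hT0]
    | succ n ih =>
      rw [hTsucc, map₂_le]
      intro x hx m hm
      rw [LieModule.lowerCentralSeries_succ]
      exact LieSubmodule.lie_mem_lie (LieSubmodule.mem_top x) (ih hm)
  have hTbot : ∀ n, r ≤ n → T n = ⊥ := by
    intro n hn
    have h1 : LieModule.lowerCentralSeries ℝ L L n = ⊥ :=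
      le_bot_iff.mp (hnil ▸ LieModule.antitone_lowerCentralSeries ℝ L L hn)
    have h2 := hTlcs n
    rw [h1] at h2
    simpa using h2
  -- M is finite dimensional
  have hMfg : M.FG := by
    have hTfg : ∀ n, (T n).FG := by
      intro n
      induction n with
      | zero => rw [hT0]; exact (Submodule.fg_iff_finiteDimensional V).mpr ‹_›
      | succ n ih => rw [hTsucc]; exact ((Submodule.fg_iff_finiteDimensional V).mpr ‹_›).map₂ B ih
    have : M = (Finset.range (r + 1)).sup T := by
      apply le_antisymm
      · refine iSup_le fun n => ?_
        rcases le_or_gt n r with h | h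
        · exact Finset.le_sup (Finset.mem_range.mpr (Nat.lt_succ_of_le h))
        · rw [hTbot n h.le]; exact bot_le
      · exact Finset.sup_le fun n _ => hTM n
    rw [this]
    exact Submodule.fg_finset_sup _ T fun n _ => hTfg n
  haveI : FiniteDimensional ℝ M := (Submodule.fg_iff_finiteDimensional M).mp hMfg
  -- assemble the Lie subalgebra
  set K : LieSubalgebra ℝ L := { M with lie_mem' := fun {x y} hx hy => hMM x hx y hy } with hK
  have hle : LieSubalgebra.lieSpan ℝ L (V : Set L) ≤ K :=
    (LieSubalgebra.lieSpan_le).mpr (by exact_mod_cast (hT0 ▸ hTM 0 : V ≤ M))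
  exact Submodule.finiteDimensional_of_le (S₂ := M) hle
end

section
/- Let H and V be real separable Hilbert spaces, where V carries a Lie algebra structure over ℝ whose bracket [·,·]_V is continuous bilinear and Hilbert–Schmidt (∑_{i,j} ‖[f_i,f_j]_V‖² < ∞ for a Hilbert basis (f_j) of V), and let β : H → V be a Hilbert–Schmidt linear map (∑_i ‖β(h_i)‖² < ∞ for a Hilbert basis (h_i) of H). Then the Lie bracket on the Hilbert space direct sum H ⊕ V defined by [(X,U),(Y,W)] := (0, [β(X) + U, β(Y) + W]_V) is Hilbert–Schmidt: the sum over all pairs of elements of the orthonormal basis {(h_i,0)} ∪ {(0,f_j)} of H ⊕ V of the squared norms of their brackets is finite. -/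
open Filter Topology

set_option maxHeartbeats 1000000

/-- Summability on a sum type from summability on both summands. -/
lemma summable_sum_elim' {α β M : Type*} [AddCommMonoid M] [TopologicalSpace M]
    [ContinuousAdd M] {f : α ⊕ β → M}
    (h1 : Summable fun a => f (Sum.inl a)) (h2 : Summable fun b => f (Sum.inr b)) :
    Summable f := by
  obtain ⟨a, ha⟩ := h1
  obtain ⟨b, hb⟩ := h2
  refine ⟨a + b, HasSum.add_isCompl Set.isCompl_range_inl_range_inr ?_ ?_⟩
  · exact (Sum.inl_injective.hasSum_range_iff).2 ha
  · exact (Sum.inr_injective.hasSum_range_iff).2 hb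

/-- Cauchy–Schwarz bound for the squared norm of an infinite sum `∑ cᵢ • vᵢ`. -/
lemma norm_sq_hasSum_smul_le {V : Type*} [NormedAddCommGroup V] [NormedSpace ℝ V]
    {c : ℕ → ℝ} {v : ℕ → V} {w : V} (hw : HasSum (fun i => c i • v i) w)
    {A B : ℝ} (hA : ∀ s : Finset ℕ, ∑ i ∈ s, c i ^ 2 ≤ A)
    (hB : ∀ s : Finset ℕ, ∑ i ∈ s, ‖v i‖ ^ 2 ≤ B) :
    ‖w‖ ^ 2 ≤ A * B := by
  have hA0 : 0 ≤ A := le_trans (by simp) (hA ∅)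
  have ht : Tendsto (fun s : Finset ℕ => ‖∑ i ∈ s, c i • v i‖ ^ 2) atTop (𝓝 (‖w‖ ^ 2)) :=
    (hw.norm).pow 2
  refine le_of_tendsto ht (Filter.Eventually.of_forall fun s => ?_)
  calc ‖∑ i ∈ s, c i • v i‖ ^ 2
      ≤ (∑ i ∈ s, |c i| * ‖v i‖) ^ 2 := by
        apply pow_le_pow_left₀ (norm_nonneg _)
        refine (norm_sum_le _ _).trans_eq ?_
        simp [norm_smul, Real.norm_eq_abs]
    _ ≤ (∑ i ∈ s, |c i| ^ 2) * ∑ i ∈ s, ‖v i‖ ^ 2 :=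
        Finset.sum_mul_sq_le_sq_mul_sq s _ _
    _ ≤ A * B := by
        refine mul_le_mul ?_ (hB s) (Finset.sum_nonneg fun i _ => sq_nonneg _) hA0
        simpa [sq_abs] using hA s


/-- If `V` is a separable Hilbert–Lie algebra with Hilbert–Schmidt bracket and
`β : H → V` is a Hilbert–Schmidt linear map from a separable Hilbert space `H`, then the bracket
`[(X,U),(Y,W)] := (0, [β(X)+U, β(Y)+W]_V)` on the Hilbert direct sum `H ⊕ V` is Hilbert–Schmidt
with respect to the orthonormal basis `{(hᵢ,0)} ∪ {(0,fⱼ)}`. -/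
theorem betaBracket_hilbertSchmidt
    {H V : Type*} [NormedAddCommGroup H] [InnerProductSpace ℝ H] [CompleteSpace H]
    [NormedAddCommGroup V] [InnerProductSpace ℝ V] [CompleteSpace V]
    (brV : V →ₗ[ℝ] V →ₗ[ℝ] V)
    (hcont : Continuous fun p : V × V => brV p.1 p.2)
    (halt : ∀ x : V, brV x x = 0)
    (hjac : ∀ x y z : V, brV x (brV y z) = brV (brV x y) z + brV y (brV x z))
    (f : HilbertBasis ℕ ℝ V)
    (hHS : Summable fun p : ℕ × ℕ => ‖brV (f p.1) (f p.2)‖ ^ 2)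
    (h : HilbertBasis ℕ ℝ H) (β : H →ₗ[ℝ] V)
    (hβ : Summable fun i : ℕ => ‖β (h i)‖ ^ 2) :
    let bv : ℕ ⊕ ℕ → H × V := Sum.elim (fun i => (h i, 0)) fun j => (0, f j)
    Summable fun p : (ℕ ⊕ ℕ) × (ℕ ⊕ ℕ) =>
      ‖(WithLp.equiv 2 (H × V)).symm
          ((0 : H), brV (β (bv p.1).1 + (bv p.1).2) (β (bv p.2).1 + (bv p.2).2))‖ ^ 2 := by
  intro bv
  -- the vector entering the bracket for each index
  set a : ℕ ⊕ ℕ → V := Sum.elim (fun i => β (h i)) (fun j => f j) with ha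
  have hbv : ∀ q : ℕ ⊕ ℕ, β (bv q).1 + (bv q).2 = a q := by
    rintro (i | j) <;> simp [bv, ha]
  -- reduce to summability of the bracket norms
  have hred : ∀ p : (ℕ ⊕ ℕ) × (ℕ ⊕ ℕ),
      ‖(WithLp.equiv 2 (H × V)).symm
          ((0 : H), brV (β (bv p.1).1 + (bv p.1).2) (β (bv p.2).1 + (bv p.2).2))‖ ^ 2
        = ‖brV (a p.1) (a p.2)‖ ^ 2 := by
    intro p
    rw [hbv, hbv, WithLp.prod_norm_sq_eq_of_L2]
    simp
  rw [summable_congr hred]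
  -- continuity of partial applications as bundled maps
  have hcontR : ∀ x : V, Continuous fun z : V => brV x z := fun x =>
    hcont.comp (continuous_const.prodMk continuous_id)
  have hcontL : ∀ y : V, Continuous fun z : V => brV z y := fun y =>
    hcont.comp (continuous_id.prodMk continuous_const)
  -- expansions of the bracket along the Hilbert basis
  have hexpR : ∀ (x y : V), HasSum (fun j => f.repr y j • brV x (f j)) (brV x y) := by
    intro x y
    have := (f.hasSum_repr y).map (brV x).toAddMonoidHom (hcontR x)
    simpa [Function.comp_def, map_smul] using this
  have hexpL : ∀ (y x : V), HasSum (fun i => f.repr x i • brV (f i) y) (brV x y) := by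
    intro y x
    have := (f.hasSum_repr x).map (brV.flip y).toAddMonoidHom (hcontL y)
    simpa [Function.comp_def, map_smul, LinearMap.flip_apply] using this
  -- Bessel: partial sums of squared coefficients are bounded by ‖x‖²
  have hbessel : ∀ (x : V) (s : Finset ℕ), ∑ i ∈ s, (f.repr x i) ^ 2 ≤ ‖x‖ ^ 2 := by
    intro x s
    have := f.orthonormal.sum_inner_products_le (s := s) x
    simpa [f.repr_apply_apply, Real.norm_eq_abs, sq_abs] using this
  -- summability of columns and rows
  have hcol : ∀ j, Summable fun i => ‖brV (f i) (f j)‖ ^ 2 := fun j =>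
    hHS.comp_injective (i := fun i : ℕ => (i, j)) fun _ _ hh => (Prod.ext_iff.1 hh).1
  have hrow : ∀ i, Summable fun j => ‖brV (f i) (f j)‖ ^ 2 := fun i =>
    hHS.comp_injective (i := fun j : ℕ => (i, j)) fun _ _ hh => (Prod.ext_iff.1 hh).2
  set Sc : ℕ → ℝ := fun j => ∑' i, ‖brV (f i) (f j)‖ ^ 2 with hSc
  set Sr : ℕ → ℝ := fun i => ∑' j, ‖brV (f i) (f j)‖ ^ 2 with hSr
  have hSc0 : ∀ j, 0 ≤ Sc j := fun j => tsum_nonneg fun _ => sq_nonneg _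
  have hSr0 : ∀ i, 0 ≤ Sr i := fun i => tsum_nonneg fun _ => sq_nonneg _
  have hSrSummable : Summable Sr :=
    (hHS.hasSum.prod_fiberwise fun i => (hrow i).hasSum).summable
  have hHS' : Summable fun p : ℕ × ℕ => ‖brV (f p.2) (f p.1)‖ ^ 2 :=
    (Equiv.prodComm ℕ ℕ).summable_iff.2 hHS
  have hScSummable : Summable Sc :=
    (hHS'.hasSum.prod_fiberwise fun j => (hcol j).hasSum).summable
  set D : ℝ := ∑' j, Sc j with hDdef
  have hD0 : 0 ≤ D := tsum_nonneg hSc0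
  -- pointwise bounds
  have b1 : ∀ (x : V) (j : ℕ), ‖brV x (f j)‖ ^ 2 ≤ ‖x‖ ^ 2 * Sc j := by
    intro x j
    refine norm_sq_hasSum_smul_le (hexpL (f j) x) (hbessel x) fun s => ?_
    exact Summable.sum_le_tsum s (fun i _ => sq_nonneg _) (hcol j)
  have b2 : ∀ (x : V) (i : ℕ), ‖brV (f i) x‖ ^ 2 ≤ ‖x‖ ^ 2 * Sr i := by
    intro x i
    refine norm_sq_hasSum_smul_le (hexpR (f i) x) (hbessel x) fun s => ?_
    exact Summable.sum_le_tsum s (fun j _ => sq_nonneg _) (hrow i)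
  have b3 : ∀ x y : V, ‖brV x y‖ ^ 2 ≤ ‖y‖ ^ 2 * (‖x‖ ^ 2 * D) := by
    intro x y
    refine norm_sq_hasSum_smul_le (hexpR x y) (hbessel y) fun s => ?_
    calc ∑ j ∈ s, ‖brV x (f j)‖ ^ 2 ≤ ∑ j ∈ s, ‖x‖ ^ 2 * Sc j :=
          Finset.sum_le_sum fun j _ => b1 x j
      _ = ‖x‖ ^ 2 * ∑ j ∈ s, Sc j := by rw [Finset.mul_sum]
      _ ≤ ‖x‖ ^ 2 * D := by
          refine mul_le_mul_of_nonneg_left ?_ (sq_nonneg _)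
          exact Summable.sum_le_tsum s (fun j _ => hSc0 j) hScSummable
  -- split the sum over the four quadrants
  have q11 : Summable fun p : ℕ × ℕ => ‖brV (β (h p.1)) (β (h p.2))‖ ^ 2 := by
    have hle : ∀ p : ℕ × ℕ,
        ‖brV (β (h p.1)) (β (h p.2))‖ ^ 2 ≤ (‖β (h p.1)‖ ^ 2 * D) * ‖β (h p.2)‖ ^ 2 := by
      intro p
      refine (b3 (β (h p.1)) (β (h p.2))).trans_eq ?_
      ring
    refine Summable.of_nonneg_of_le (fun p => sq_nonneg _) hle ?_
    exact (hβ.mul_right D).mul_of_nonneg hβ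
      (fun i => mul_nonneg (sq_nonneg _) hD0) (fun i => sq_nonneg _)
  have q12 : Summable fun p : ℕ × ℕ => ‖brV (β (h p.1)) (f p.2)‖ ^ 2 := by
    refine Summable.of_nonneg_of_le (fun p => sq_nonneg _)
      (fun p => b1 (β (h p.1)) p.2) ?_
    exact hβ.mul_of_nonneg hScSummable (fun i => sq_nonneg _) hSc0
  have q21 : Summable fun p : ℕ × ℕ => ‖brV (f p.1) (β (h p.2))‖ ^ 2 := by
    refine Summable.of_nonneg_of_le (fun p => sq_nonneg _)
      (fun p => (b2 (β (h p.2)) p.1).trans_eq (mul_comm _ _)) ?_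
    exact hSrSummable.mul_of_nonneg hβ hSr0 (fun i => sq_nonneg _)
  rw [← (Equiv.sumProdDistrib ℕ ℕ (ℕ ⊕ ℕ)).symm.summable_iff]
  refine summable_sum_elim' ?_ ?_
  · rw [← (Equiv.prodSumDistrib ℕ ℕ ℕ).symm.summable_iff]
    refine summable_sum_elim' ?_ ?_
    · exact q11
    · exact q12
  · rw [← (Equiv.prodSumDistrib ℕ ℕ ℕ).symm.summable_iff]
    refine summable_sum_elim' ?_ ?_
    · exact q21
    · exact hHS
end

section
/- The topology on H induced by the Riemannian distance d coincides with the Hilbert norm topology on H; that is, a set is open for the metric d if and only if it is open for the norm ‖·‖_H. -/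
open scoped Classical

/-- Left-iterated Lie bracket of a list of elements. -/
def brFold {H : Type*} [AddCommGroup H] [Module ℝ H]
    (br : H →ₗ[ℝ] H →ₗ[ℝ] H) : List H → H
  | [] => 0
  | x :: xs => xs.foldl (fun a c => br a c) x

/-- The word `ad_g^{n₁} ad_h^{m₁} ⋯ ad_g^{n_k} ad_h^{m_k} g` associated to the list
`[(n₁,m₁),…,(n_k,m_k)]`. -/
def bchWord {H : Type*} [AddCommGroup H] [Module ℝ H]
    (br : H →ₗ[ℝ] H →ₗ[ℝ] H) (g h : H) : List (ℕ × ℕ) → H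
  | [] => g
  | (a, b) :: rest => (fun y => br g y)^[a] ((fun y => br h y)^[b] (bchWord br g h rest))

/-- The coefficient `a^k_{n,m} = (-1)^k / ((k+1)·n!·m!·(|n|+1))` of the
Baker–Campbell–Hausdorff–Dynkin series, for the list `[(n₁,m₁),…,(n_k,m_k)]`. -/
noncomputable def bchCoeff (l : List (ℕ × ℕ)) : ℝ :=
  ((-1 : ℝ) ^ l.length) /
    (((l.length + 1 : ℕ) : ℝ) *
      (((l.map fun p => Nat.factorial p.1).prod : ℕ) : ℝ) *
      (((l.map fun p => Nat.factorial p.2).prod : ℕ) : ℝ) *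
      ((((l.map Prod.fst).sum + 1 : ℕ)) : ℝ))

/-- The Baker–Campbell–Hausdorff–Dynkin product
`g·h = g + h + ∑_{k=1}^{r-1} ∑_{(n,m)∈I_k} a^k_{n,m} ad_g^{n₁} ad_h^{m₁} ⋯ ad_g^{n_k} ad_h^{m_k} g`
on a Lie algebra nilpotent of step `r` (only multi-indices with all entries `< r` can
contribute a nonzero term under nilpotency of step `r`, so the sum below is the full one). -/
noncomputable def bchMul {H : Type*} [AddCommGroup H] [Module ℝ H]
    (r : ℕ) (br : H →ₗ[ℝ] H →ₗ[ℝ] H) (g h : H) : H :=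
  g + h + ∑ k ∈ Finset.Icc 1 (r - 1), ∑ nm : Fin k → Fin r × Fin r,
    if (∀ i, 0 < ((nm i).1 : ℕ) + ((nm i).2 : ℕ)) then
      bchCoeff (List.ofFn fun i => (((nm i).1 : ℕ), ((nm i).2 : ℕ))) •
        bchWord br g h (List.ofFn fun i => (((nm i).1 : ℕ), ((nm i).2 : ℕ)))
    else 0

/-- The length `ℓ(g) = ∫₀¹ ‖(DL_{-g(s)})(g(s))[g′(s)]‖ ds` of a path `g : ℝ → H`, where
`L_x y = x·y` is the Baker–Campbell–Hausdorff–Dynkin left translation. -/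
noncomputable def pathLength {H : Type*} [NormedAddCommGroup H] [InnerProductSpace ℝ H]
    [CompleteSpace H] (r : ℕ) (br : H →ₗ[ℝ] H →ₗ[ℝ] H) (g : ℝ → H) : ℝ :=
  ∫ s in (0 : ℝ)..1, ‖(fderiv ℝ (fun y => bchMul r br (-(g s)) y) (g s)) (deriv g s)‖

/-- The Riemannian distance
`d(x,y) = inf{ℓ(g) : g C¹ path, g(0) = x, g(1) = y}` on `G_CM`. -/
noncomputable def rDist {H : Type*} [NormedAddCommGroup H] [InnerProductSpace ℝ H]
    [CompleteSpace H] (r : ℕ) (br : H →ₗ[ℝ] H →ₗ[ℝ] H) (x y : H) : ℝ :=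
  sInf {c : ℝ | ∃ g : ℝ → H, ContDiff ℝ 1 g ∧ g 0 = x ∧ g 1 = y ∧ c = pathLength r br g}

namespace RD

variable {H : Type*} [NormedAddCommGroup H] [NormedSpace ℝ H]
variable (br : H →ₗ[ℝ] H →ₗ[ℝ] H)

theorem exists_bound (hcont : Continuous fun p : H × H => br p.1 p.2) :
    ∃ C : ℝ, 0 ≤ C ∧ ∀ x y, ‖br x y‖ ≤ C * ‖x‖ * ‖y‖ := by
  have h0 : Filter.Tendsto (fun p : H × H => br p.1 p.2) (nhds (0,0)) (nhds 0) := by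
    have := hcont.continuousAt (x := ((0,0) : H × H))
    simpa [ContinuousAt] using this
  obtain ⟨δ, hδ, hball⟩ := Metric.tendsto_nhds_nhds.mp h0 1 one_pos
  refine ⟨4 / δ ^ 2, by positivity, fun x y => ?_⟩
  rcases eq_or_ne x 0 with rfl | hx
  · simp
  rcases eq_or_ne y 0 with rfl | hy
  · simp
  have hxn : (0:ℝ) < ‖x‖ := norm_pos_iff.mpr hx
  have hyn : (0:ℝ) < ‖y‖ := norm_pos_iff.mpr hy
  set x' := (δ / (2 * ‖x‖)) • x with hx'
  set y' := (δ / (2 * ‖y‖)) • y with hy'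
  have hx'n : ‖x'‖ = δ / 2 := by
    rw [hx', norm_smul, Real.norm_eq_abs, abs_of_pos (by positivity)]
    field_simp
  have hy'n : ‖y'‖ = δ / 2 := by
    rw [hy', norm_smul, Real.norm_eq_abs, abs_of_pos (by positivity)]
    field_simp
  have hdist : dist ((x', y') : H × H) (0, 0) < δ := by
    rw [Prod.dist_eq]
    simp only [dist_zero_right, hx'n, hy'n, max_self]
    linarith
  have hb := hball hdist
  rw [dist_zero_right] at hb
  have hval : br x' y' = ((δ / (2 * ‖x‖)) * (δ / (2 * ‖y‖))) • br x y := by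
    simp [hx', hy', map_smul, LinearMap.smul_apply, smul_smul, mul_comm]
  rw [hval, norm_smul, Real.norm_eq_abs, abs_of_pos (by positivity)] at hb
  have h1 : (0:ℝ) < (δ / (2 * ‖x‖)) * (δ / (2 * ‖y‖)) := by positivity
  have : ‖br x y‖ < 1 / ((δ / (2 * ‖x‖)) * (δ / (2 * ‖y‖))) := by
    rw [lt_div_iff₀ h1]
    linarith [hb]
  have heq : 1 / ((δ / (2 * ‖x‖)) * (δ / (2 * ‖y‖))) = 4 / δ ^ 2 * ‖x‖ * ‖y‖ := by
    field_simp; ring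
  linarith [this, heq ▸ this]

theorem br_antisymm (halt : ∀ x : H, br x x = 0) (x y : H) : br x y = - br y x := by
  have h := halt (x + y)
  simp only [map_add, LinearMap.add_apply, halt] at h
  have h2 : br x y + br y x = 0 := by
    have h3 : (0:H) + br y x + (br x y + 0) = br y x + br x y := by abel
    rw [h3] at h
    rw [add_comm]
    exact h
  exact eq_neg_of_add_eq_zero_left h2


/-- Span of left-nested brackets of length at least `j`. -/
def J (j : ℕ) : Submodule ℝ H :=
  Submodule.span ℝ {x | ∃ l : List H, j ≤ l.length ∧ brFold br l = x}

theorem mem_J_one (v : H) : v ∈ J br 1 :=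
  Submodule.subset_span ⟨[v], by simp, rfl⟩

theorem J_antitone {i j : ℕ} (h : i ≤ j) : J br j ≤ J br i := by
  apply Submodule.span_mono
  rintro x ⟨l, hl, rfl⟩
  exact ⟨l, h.trans hl, rfl⟩

theorem foldl_br_zero (l : List H) : l.foldl (fun a c => br a c) 0 = 0 := by
  induction l with
  | nil => rfl
  | cons c cs ih => simp only [List.foldl_cons, map_zero, LinearMap.zero_apply]; exact ih

theorem brFold_append (x : H) (xs : List H) (a : H) :
    brFold br (x :: (xs ++ [a])) = br (brFold br (x :: xs)) a := by
  simp [brFold, List.foldl_append]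

theorem brFold_eq_zero (r : ℕ) (hnil : ∀ (x : H) (l : List H), l.length = r → brFold br (x :: l) = 0)
    {l : List H} (hl : r + 1 ≤ l.length) : brFold br l = 0 := by
  rcases l with _ | ⟨x, xs⟩
  · simp at hl
  have hxs : r ≤ xs.length := by simpa using hl
  have hsplit : xs = xs.take r ++ xs.drop r := (List.take_append_drop r xs).symm
  have htake : (xs.take r).length = r := by
    rw [List.length_take]; omega
  show xs.foldl (fun a c => br a c) x = 0
  rw [hsplit, List.foldl_append]
  have h0 : (xs.take r).foldl (fun a c => br a c) x = 0 := hnil x (xs.take r) htake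
  rw [h0, foldl_br_zero]

theorem J_bot (r : ℕ) (hnil : ∀ (x : H) (l : List H), l.length = r → brFold br (x :: l) = 0)
    {w : H} (hw : w ∈ J br (r + 1)) : w = 0 := by
  have : J br (r+1) ≤ ⊥ := by
    rw [J, Submodule.span_le]
    rintro x ⟨l, hl, rfl⟩
    simp only [SetLike.mem_coe, Submodule.mem_bot]
    exact brFold_eq_zero br r hnil hl
  simpa using this hw

theorem br_mem_succ {k : ℕ} {x : H} (hx : x ∈ J br k) (a : H) : br x a ∈ J br (k + 1) := by
  induction hx using Submodule.span_induction with
  | mem y hy =>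
    obtain ⟨l, hl, rfl⟩ := hy
    rcases l with _ | ⟨c, cs⟩
    · show br 0 a ∈ _
      simp only [map_zero, LinearMap.zero_apply]
      exact Submodule.zero_mem _
    · refine Submodule.subset_span ⟨c :: (cs ++ [a]), ?_, brFold_append br c cs a⟩
      simp only [List.length_cons, List.length_append] at hl ⊢
      omega
  | zero => simp only [map_zero, LinearMap.zero_apply]; exact Submodule.zero_mem _
  | add y z _ _ hy hz => simp only [map_add, LinearMap.add_apply]; exact Submodule.add_mem _ hy hz
  | smul t y _ hy => simp only [map_smul, LinearMap.smul_apply]; exact Submodule.smul_mem _ t hy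

theorem br_mem_fold (halt : ∀ x : H, br x x = 0)
    (hjac : ∀ x y z : H, br x (br y z) = br (br x y) z + br y (br x z)) :
    ∀ (l : List H), l ≠ [] → ∀ (m : ℕ) (x : H), x ∈ J br m →
      br x (brFold br l) ∈ J br (m + l.length) := by
  intro l
  induction l using List.reverseRecOn with
  | nil => intro h; exact absurd rfl h
  | append_singleton l' a ih =>
    intro _ m x hx
    rcases l' with _ | ⟨c, cs⟩
    · -- l = [a]
      show br x (brFold br [a]) ∈ J br (m + 1)
      exact br_mem_succ br hx a
    · have hfold : brFold br ((c :: cs) ++ [a]) = br (brFold br (c :: cs)) a := by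
        simpa using brFold_append br c cs a
      rw [hfold, hjac]
      set w := brFold br (c :: cs)
      have hw : br x w ∈ J br (m + (c :: cs).length) := ih (by simp) m x hx
      have h1 : br (br x w) a ∈ J br (m + (c :: cs).length + 1) :=
        br_mem_succ br hw a
      have hxa : br x a ∈ J br (m + 1) := br_mem_succ br hx a
      have h2 : br (br x a) w ∈ J br (m + 1 + (c :: cs).length) :=
        ih (by simp) (m + 1) (br x a) hxa
      have h2' : br w (br x a) ∈ J br (m + 1 + (c :: cs).length) := by
        rw [br_antisymm br halt w (br x a)]
        exact Submodule.neg_mem _ h2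
      have hlen : ((c :: cs) ++ [a]).length = (c :: cs).length + 1 := by simp
      rw [hlen]
      have e1 : m + (c :: cs).length + 1 = m + ((c :: cs).length + 1) := by omega
      have e2 : m + 1 + (c :: cs).length = m + ((c :: cs).length + 1) := by omega
      exact Submodule.add_mem _ (e1 ▸ h1) (e2 ▸ h2')

theorem br_mem (halt : ∀ x : H, br x x = 0)
    (hjac : ∀ x y z : H, br x (br y z) = br (br x y) z + br y (br x z))
    {m n : ℕ} {x y : H} (hx : x ∈ J br m) (hy : y ∈ J br n) :
    br x y ∈ J br (m + n) := by
  induction hy using Submodule.span_induction with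
  | mem z hz =>
    obtain ⟨l, hl, rfl⟩ := hz
    rcases l with _ | ⟨c, cs⟩
    · show br x 0 ∈ _; simp only [map_zero]; exact Submodule.zero_mem _
    · have := br_mem_fold br halt hjac (c :: cs) (by simp) m x hx
      exact J_antitone br (Nat.add_le_add_left hl m) this
  | zero => simp only [map_zero]; exact Submodule.zero_mem _
  | add y z _ _ hy hz => simp only [map_add]; exact Submodule.add_mem _ hy hz
  | smul t y _ hy => simp only [map_smul]; exact Submodule.smul_mem _ t hy


variable (B : H →L[ℝ] H →L[ℝ] H)

/-- Derivative in `h` at `z` of `h ↦ (ad_h)^[b] (u h)`, given value `u` and derivative `du`. -/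
noncomputable def DD : ℕ → H → H → (H →L[ℝ] H) → (H →L[ℝ] H)
  | 0, _, _, du => du
  | b+1, z, u, du => B.flip ((⇑(B z))^[b] u) + (B z).comp (DD b z u du)

/-- Derivative in `h` at `z` of `h ↦ bchWord br g h l`. -/
noncomputable def Dword : H → H → List (ℕ × ℕ) → (H →L[ℝ] H)
  | _, _, [] => 0
  | g, z, (a, b) :: rest =>
      ((B g) ^ a).comp (DD B b z (bchWord br g z rest) (Dword g z rest))

theorem DD_zero (z u : H) (du : H →L[ℝ] H) : DD B 0 z u du = du := rfl

theorem DD_succ (b : ℕ) (z u : H) (du : H →L[ℝ] H) :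
    DD B (b+1) z u du = B.flip ((⇑(B z))^[b] u) + (B z).comp (DD B b z u du) := rfl

theorem Dword_nil (g z : H) : Dword br B g z [] = 0 := rfl

theorem Dword_cons (g z : H) (a b : ℕ) (rest : List (ℕ × ℕ)) :
    Dword br B g z ((a, b) :: rest)
      = ((B g) ^ a).comp (DD B b z (bchWord br g z rest) (Dword br B g z rest)) := rfl

theorem hBfun (hB : ∀ x y : H, B x y = br x y) (x : H) : (fun w => br x w) = ⇑(B x) := by
  funext w; rw [hB]

theorem hasFDerivAt_iter (hB : ∀ x y : H, B x y = br x y) {u : H → H} {du : H →L[ℝ] H} (z : H)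
    (hu : HasFDerivAt u du z) (b : ℕ) :
    HasFDerivAt (fun h => (fun w => br h w)^[b] (u h)) (DD B b z (u z) du) z := by
  induction b with
  | zero => simpa [DD] using hu
  | succ b ih =>
    have heq : (fun h => (fun w => br h w)^[b+1] (u h))
        = fun h => B h ((fun w => br h w)^[b] (u h)) := by
      funext h
      rw [Function.iterate_succ_apply', hB]
    rw [heq]
    have h2 := B.hasFDerivAt_of_bilinear (hasFDerivAt_id z) ih
    have h3 : ContinuousLinearMap.precompR H B (id z) (DD B b z (u z) du) +
        ContinuousLinearMap.precompL H B (ContinuousLinearMap.id ℝ H) ((fun w => br z w)^[b] (u z))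
        = DD B (b+1) z (u z) du := by
      rw [DD_succ]
      ext v
      simp only [ContinuousLinearMap.add_apply, ContinuousLinearMap.coe_comp',
        Function.comp_apply, ContinuousLinearMap.flip_apply,
        ContinuousLinearMap.precompR_apply, ContinuousLinearMap.precompL_apply,
        ContinuousLinearMap.coe_id', id_eq, ContinuousLinearMap.compL_apply]
      rw [hBfun br B hB z]
      abel
    rw [h3] at h2
    exact h2

theorem hasFDerivAt_word (hB : ∀ x y : H, B x y = br x y) (g z : H) (l : List (ℕ × ℕ)) :
    HasFDerivAt (fun h => bchWord br g h l) (Dword br B g z l) z := by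
  induction l with
  | nil => simpa [bchWord, Dword] using hasFDerivAt_const g z
  | cons p rest ih =>
    obtain ⟨a, b⟩ := p
    have hinner := hasFDerivAt_iter br B hB z ih b
    have houter := ((B g) ^ a).hasFDerivAt.comp z hinner
    have heq : (fun h => bchWord br g h ((a, b) :: rest))
        = fun h => ((B g) ^ a) ((fun w => br h w)^[b] (bchWord br g h rest)) := by
      funext h
      show (fun y => br g y)^[a] _ = _
      rw [hBfun br B hB g, FunLike.coe_pow_eq_iterate]
    rw [heq, Dword_cons]
    exact houter


/-- Unbundled version of `DD` applied to a vector; `w` stands for `du v`. -/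
def ddr : ℕ → H → H → H → H → H
  | 0, _, _, w, _ => w
  | b+1, z, u, w, v => br v ((fun t => br z t)^[b] u) + br z (ddr b z u w v)

/-- Unbundled version of `Dword` applied to a vector. -/
def dwr : H → H → List (ℕ × ℕ) → H → H
  | _, _, [], _ => 0
  | g, z, (a, b) :: rest, v =>
      (fun t => br g t)^[a] (ddr br b z (bchWord br g z rest) (dwr g z rest v) v)

theorem DD_apply (hB : ∀ x y : H, B x y = br x y) (b : ℕ) (z u : H) (du : H →L[ℝ] H) (v : H) :
    DD B b z u du v = ddr br b z u (du v) v := by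
  induction b with
  | zero => rfl
  | succ b ih =>
    rw [DD_succ]
    simp only [ContinuousLinearMap.add_apply, ContinuousLinearMap.coe_comp', Function.comp_apply,
      ContinuousLinearMap.flip_apply]
    show B v _ + B z _ = _
    rw [hB, hB, ih, ← hBfun br B hB z]
    rfl

theorem Dword_apply (hB : ∀ x y : H, B x y = br x y) (g z : H) (l : List (ℕ × ℕ)) (v : H) :
    Dword br B g z l v = dwr br g z l v := by
  induction l with
  | nil => rfl
  | cons p rest ih =>
    obtain ⟨a, b⟩ := p
    rw [Dword_cons]
    simp only [ContinuousLinearMap.coe_comp', Function.comp_apply, FunLike.coe_pow_eq_iterate]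
    rw [DD_apply br B hB, ih, ← hBfun br B hB g]
    rfl

/-! ### Membership of derivative values in the bracket filtration -/

theorem iter_mem (halt : ∀ x : H, br x x = 0) {k : ℕ} (x : H) {w : H} (hw : w ∈ J br k) (n : ℕ) :
    (fun t => br x t)^[n] w ∈ J br k := by
  induction n with
  | zero => simpa using hw
  | succ n ih =>
    rw [Function.iterate_succ_apply']
    rw [br_antisymm br halt]
    exact Submodule.neg_mem _ (J_antitone br (Nat.le_succ k) (br_mem_succ br ih x))

theorem ddr_mem (halt : ∀ x : H, br x x = 0)
    (hjac : ∀ x y z : H, br x (br y z) = br (br x y) z + br y (br x z))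
    (b : ℕ) (z u : H) {j : ℕ} {w v : H} (hw : w ∈ J br (j + 1)) (hv : v ∈ J br j) :
    ddr br b z u w v ∈ J br (j + 1) := by
  induction b with
  | zero => exact hw
  | succ b ih =>
    show br v _ + br z _ ∈ _
    refine Submodule.add_mem _ ?_ ?_
    · have h1 : (fun t => br z t)^[b] u ∈ J br 1 := iter_mem br halt z (mem_J_one br u) b
      exact br_mem br halt hjac hv h1
    · rw [br_antisymm br halt]
      exact Submodule.neg_mem _ (J_antitone br (by omega) (br_mem_succ br ih z))

theorem dwr_mem (halt : ∀ x : H, br x x = 0)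
    (hjac : ∀ x y z : H, br x (br y z) = br (br x y) z + br y (br x z))
    (g z : H) (l : List (ℕ × ℕ)) {j : ℕ} {v : H} (hv : v ∈ J br j) :
    dwr br g z l v ∈ J br (j + 1) := by
  induction l with
  | nil => exact Submodule.zero_mem _
  | cons p rest ih =>
    obtain ⟨a, b⟩ := p
    show (fun t => br g t)^[a] _ ∈ _
    exact iter_mem br halt g (ddr_mem br halt hjac b z _ ih hv) a

/-! ### Norm bounds -/

theorem iter_bound {C : ℝ} (hC0 : 0 ≤ C) (hC : ∀ x y, ‖br x y‖ ≤ C * ‖x‖ * ‖y‖)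
    (n : ℕ) (x u : H) : ‖(fun t => br x t)^[n] u‖ ≤ (C * ‖x‖) ^ n * ‖u‖ := by
  induction n with
  | zero => simp
  | succ n ih =>
    rw [Function.iterate_succ_apply']
    calc ‖br x ((fun t => br x t)^[n] u)‖ ≤ C * ‖x‖ * ‖(fun t => br x t)^[n] u‖ := hC _ _
    _ ≤ C * ‖x‖ * ((C * ‖x‖) ^ n * ‖u‖) := by
        apply mul_le_mul_of_nonneg_left ih (by positivity)
    _ = (C * ‖x‖) ^ (n+1) * ‖u‖ := by ring

theorem ddr_bound {C : ℝ} (hC0 : 0 ≤ C) (hC : ∀ x y, ‖br x y‖ ≤ C * ‖x‖ * ‖y‖)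
    (b : ℕ) {R Ku Kd : ℝ} (hR : 0 ≤ R) (hKu : 0 ≤ Ku) (hKd : 0 ≤ Kd) :
    ∃ K, 0 ≤ K ∧ ∀ z u w v : H, ‖z‖ ≤ R → ‖u‖ ≤ Ku → ‖w‖ ≤ Kd * ‖v‖ →
      ‖ddr br b z u w v‖ ≤ K * ‖v‖ := by
  induction b with
  | zero => exact ⟨Kd, hKd, fun z u w v _ _ hw => hw⟩
  | succ b ih =>
    obtain ⟨K, hK0, hK⟩ := ih
    refine ⟨C * (C * R) ^ b * Ku + C * R * K, by positivity, fun z u w v hz hu hw => ?_⟩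
    show ‖br v _ + br z _‖ ≤ _
    calc ‖br v ((fun t => br z t)^[b] u) + br z (ddr br b z u w v)‖
        ≤ ‖br v ((fun t => br z t)^[b] u)‖ + ‖br z (ddr br b z u w v)‖ := norm_add_le _ _
    _ ≤ C * ‖v‖ * ((C * ‖z‖) ^ b * ‖u‖) + C * ‖z‖ * (K * ‖v‖) := by
        gcongr
        · exact (hC _ _).trans (by gcongr; exact iter_bound br hC0 hC b z u)
        · exact (hC _ _).trans (by gcongr; exact hK z u w v hz hu hw)
    _ ≤ C * ‖v‖ * ((C * R) ^ b * Ku) + C * R * (K * ‖v‖) := by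
        gcongr <;> first | exact norm_nonneg _ | exact hz | exact hu | positivity
    _ = (C * (C * R) ^ b * Ku + C * R * K) * ‖v‖ := by ring

theorem word_bound {C : ℝ} (hC0 : 0 ≤ C) (hC : ∀ x y, ‖br x y‖ ≤ C * ‖x‖ * ‖y‖)
    (l : List (ℕ × ℕ)) {R : ℝ} (hR : 0 ≤ R) :
    ∃ K, 0 ≤ K ∧ ∀ g z : H, ‖g‖ ≤ R → ‖z‖ ≤ R →
      ‖bchWord br g z l‖ ≤ K ∧ ∀ v, ‖dwr br g z l v‖ ≤ K * ‖v‖ := by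
  induction l with
  | nil =>
    refine ⟨R, hR, fun g z hg hz => ⟨hg, fun v => ?_⟩⟩
    show ‖(0:H)‖ ≤ R * ‖v‖
    simp only [norm_zero]
    positivity
  | cons p rest ih =>
    obtain ⟨a, b⟩ := p
    obtain ⟨K, hK0, hK⟩ := ih
    obtain ⟨K2, hK20, hK2⟩ := ddr_bound br hC0 hC b hR hK0 hK0 (Ku := K) (Kd := K)
    refine ⟨(C*R)^a * (C*R)^b * K + (C*R)^a * K2, by positivity, fun g z hg hz => ?_⟩
    obtain ⟨hKval, hKd⟩ := hK g z hg hz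
    constructor
    · show ‖(fun y => br g y)^[a] ((fun y => br z y)^[b] (bchWord br g z rest))‖ ≤ _
      calc ‖(fun y => br g y)^[a] ((fun y => br z y)^[b] (bchWord br g z rest))‖
          ≤ (C * ‖g‖) ^ a * ‖(fun y => br z y)^[b] (bchWord br g z rest)‖ := iter_bound br hC0 hC a g _
      _ ≤ (C * ‖g‖) ^ a * ((C * ‖z‖) ^ b * ‖bchWord br g z rest‖) := by
          gcongr
          exact iter_bound br hC0 hC b z _
      _ ≤ (C * R) ^ a * ((C * R) ^ b * K) := by gcongr <;> positivity
      _ ≤ (C*R)^a * (C*R)^b * K + (C*R)^a * K2 := by nlinarith [pow_nonneg (by positivity : (0:ℝ) ≤ C*R) a]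
    · intro v
      show ‖(fun t => br g t)^[a] (ddr br b z (bchWord br g z rest) (dwr br g z rest v) v)‖ ≤ _
      calc ‖(fun t => br g t)^[a] (ddr br b z (bchWord br g z rest) (dwr br g z rest v) v)‖
          ≤ (C * ‖g‖) ^ a * ‖ddr br b z (bchWord br g z rest) (dwr br g z rest v) v‖ :=
            iter_bound br hC0 hC a g _
      _ ≤ (C * R) ^ a * (K2 * ‖v‖) := by
          have h1 : ‖ddr br b z (bchWord br g z rest) (dwr br g z rest v) v‖ ≤ K2 * ‖v‖ :=
            hK2 z _ _ v hz hKval (hKd v)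
          have h2 : (C*‖g‖)^a ≤ (C*R)^a :=
            pow_le_pow_left₀ (by positivity) (mul_le_mul_of_nonneg_left hg hC0) a
          exact mul_le_mul h2 h1 (norm_nonneg _) (by positivity)
      _ ≤ ((C*R)^a * (C*R)^b * K + (C*R)^a * K2) * ‖v‖ := by
          have h3 : 0 ≤ (C*R)^a * (C*R)^b * K * ‖v‖ := by positivity
          nlinarith [h3]

/-! ### Continuity -/

theorem cont_iter {α : Type*} [TopologicalSpace α] (hcont : Continuous fun p : H × H => br p.1 p.2)
    {X F : α → H} (hX : Continuous X) (hF : Continuous F) (n : ℕ) :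
    Continuous fun q => (fun t => br (X q) t)^[n] (F q) := by
  induction n with
  | zero => simpa using hF
  | succ n ih =>
    have : (fun q => (fun t => br (X q) t)^[n+1] (F q))
        = fun q => br (X q) ((fun t => br (X q) t)^[n] (F q)) := by
      funext q; rw [Function.iterate_succ_apply']
    rw [this]
    exact hcont.comp (hX.prodMk ih)

theorem cont_word {α : Type*} [TopologicalSpace α] (hcont : Continuous fun p : H × H => br p.1 p.2)
    {G Z : α → H} (hG : Continuous G) (hZ : Continuous Z) (l : List (ℕ × ℕ)) :
    Continuous fun q => bchWord br (G q) (Z q) l := by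
  induction l with
  | nil => exact hG
  | cons p rest ih =>
    obtain ⟨a, b⟩ := p
    show Continuous fun q => (fun y => br (G q) y)^[a] ((fun y => br (Z q) y)^[b] (bchWord br (G q) (Z q) rest))
    exact cont_iter br hcont hG (cont_iter br hcont hZ ih b) a

theorem cont_ddr {α : Type*} [TopologicalSpace α] (hcont : Continuous fun p : H × H => br p.1 p.2)
    (b : ℕ) {Z U W V : α → H} (hZ : Continuous Z) (hU : Continuous U) (hW : Continuous W)
    (hV : Continuous V) : Continuous fun q => ddr br b (Z q) (U q) (W q) (V q) := by
  induction b with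
  | zero => exact hW
  | succ b ih =>
    show Continuous fun q => br (V q) ((fun t => br (Z q) t)^[b] (U q)) + br (Z q) (ddr br b (Z q) (U q) (W q) (V q))
    exact ((hcont.comp (hV.prodMk (cont_iter br hcont hZ hU b))).add
      (hcont.comp (hZ.prodMk ih)))

theorem cont_dwr {α : Type*} [TopologicalSpace α] (hcont : Continuous fun p : H × H => br p.1 p.2)
    {G Z V : α → H} (hG : Continuous G) (hZ : Continuous Z) (hV : Continuous V)
    (l : List (ℕ × ℕ)) :
    Continuous fun q => dwr br (G q) (Z q) l (V q) := by
  induction l with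
  | nil => exact continuous_const
  | cons p rest ih =>
    obtain ⟨a, b⟩ := p
    show Continuous fun q => (fun t => br (G q) t)^[a]
      (ddr br b (Z q) (bchWord br (G q) (Z q) rest) (dwr br (G q) (Z q) rest (V q)) (V q))
    refine cont_iter br hcont hG ?_ a
    exact cont_ddr br hcont b hZ (cont_word br hcont hG hZ rest) ih hV


/-! ### The derivative of the BCH product in its second variable -/

noncomputable def NOp (r : ℕ) (a z : H) : H →L[ℝ] H :=
  ∑ k ∈ Finset.Icc 1 (r - 1), ∑ nm : Fin k → Fin r × Fin r,
    if (∀ i, 0 < ((nm i).1 : ℕ) + ((nm i).2 : ℕ)) then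
      bchCoeff (List.ofFn fun i => (((nm i).1 : ℕ), ((nm i).2 : ℕ))) •
        Dword br B a z (List.ofFn fun i => (((nm i).1 : ℕ), ((nm i).2 : ℕ)))
    else 0

theorem hasFDerivAt_bchMul (hB : ∀ x y : H, B x y = br x y) (r : ℕ) (a z : H) :
    HasFDerivAt (fun y => bchMul r br a y)
      (ContinuousLinearMap.id ℝ H + NOp br B r a z) z := by
  have hsum : HasFDerivAt (fun y => ∑ k ∈ Finset.Icc 1 (r - 1), ∑ nm : Fin k → Fin r × Fin r,
      if (∀ i, 0 < ((nm i).1 : ℕ) + ((nm i).2 : ℕ)) then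
        bchCoeff (List.ofFn fun i => (((nm i).1 : ℕ), ((nm i).2 : ℕ))) •
          bchWord br a y (List.ofFn fun i => (((nm i).1 : ℕ), ((nm i).2 : ℕ)))
      else 0) (NOp br B r a z) z := by
    apply HasFDerivAt.fun_sum
    intro k _
    apply HasFDerivAt.fun_sum
    intro nm _
    by_cases hcond : (∀ i, 0 < ((nm i).1 : ℕ) + ((nm i).2 : ℕ))
    · simp only [if_pos hcond]
      exact (hasFDerivAt_word br B hB a z _).const_smul _
    · simp only [if_neg hcond]
      exact hasFDerivAt_const 0 z
  have hid : HasFDerivAt (fun y : H => a + y) (ContinuousLinearMap.id ℝ H) z :=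
    (hasFDerivAt_id z).const_add a
  have := hid.add hsum
  exact this

theorem NOp_apply (hB : ∀ x y : H, B x y = br x y) (r : ℕ) (a z v : H) :
    NOp br B r a z v = ∑ k ∈ Finset.Icc 1 (r - 1), ∑ nm : Fin k → Fin r × Fin r,
      if (∀ i, 0 < ((nm i).1 : ℕ) + ((nm i).2 : ℕ)) then
        bchCoeff (List.ofFn fun i => (((nm i).1 : ℕ), ((nm i).2 : ℕ))) •
          dwr br a z (List.ofFn fun i => (((nm i).1 : ℕ), ((nm i).2 : ℕ))) v
      else 0 := by
  rw [NOp, ContinuousLinearMap.sum_apply]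
  refine Finset.sum_congr rfl fun k _ => ?_
  rw [ContinuousLinearMap.sum_apply]
  refine Finset.sum_congr rfl fun nm _ => ?_
  by_cases hcond : (∀ i, 0 < ((nm i).1 : ℕ) + ((nm i).2 : ℕ))
  · simp only [if_pos hcond, ContinuousLinearMap.smul_apply, Dword_apply br B hB]
  · simp only [if_neg hcond, ContinuousLinearMap.zero_apply]

theorem NOp_mem (hB : ∀ x y : H, B x y = br x y)
    (halt : ∀ x : H, br x x = 0)
    (hjac : ∀ x y z : H, br x (br y z) = br (br x y) z + br y (br x z))
    (r : ℕ) (a z : H) {j : ℕ} {v : H} (hv : v ∈ J br j) :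
    NOp br B r a z v ∈ J br (j + 1) := by
  rw [NOp_apply br B hB]
  refine Submodule.sum_mem _ fun k _ => Submodule.sum_mem _ fun nm _ => ?_
  by_cases hcond : (∀ i, 0 < ((nm i).1 : ℕ) + ((nm i).2 : ℕ))
  · simp only [if_pos hcond]
    exact Submodule.smul_mem _ _ (dwr_mem br halt hjac a z _ hv)
  · simp only [if_neg hcond]
    exact Submodule.zero_mem _

theorem NOp_bound (hB : ∀ x y : H, B x y = br x y) {C : ℝ} (hC0 : 0 ≤ C)
    (hC : ∀ x y, ‖br x y‖ ≤ C * ‖x‖ * ‖y‖) (r : ℕ) {R : ℝ} (hR : 0 ≤ R) :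
    ∃ K, 0 ≤ K ∧ ∀ a z v : H, ‖a‖ ≤ R → ‖z‖ ≤ R → ‖NOp br B r a z v‖ ≤ K * ‖v‖ := by
  have hex : ∀ l : List (ℕ × ℕ), ∃ K, 0 ≤ K ∧ ∀ g z : H, ‖g‖ ≤ R → ‖z‖ ≤ R →
      ‖bchWord br g z l‖ ≤ K ∧ ∀ v, ‖dwr br g z l v‖ ≤ K * ‖v‖ :=
    fun l => word_bound br hC0 hC l hR
  choose KL hKL0 hKL using hex
  refine ⟨∑ k ∈ Finset.Icc 1 (r - 1), ∑ nm : Fin k → Fin r × Fin r,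
      |bchCoeff (List.ofFn fun i => (((nm i).1 : ℕ), ((nm i).2 : ℕ)))| *
        KL (List.ofFn fun i => (((nm i).1 : ℕ), ((nm i).2 : ℕ))),
    Finset.sum_nonneg fun k _ => Finset.sum_nonneg fun nm _ =>
      mul_nonneg (abs_nonneg _) (hKL0 _), ?_⟩
  intro a z v ha hz
  rw [NOp_apply br B hB]
  calc ‖∑ k ∈ Finset.Icc 1 (r - 1), ∑ nm : Fin k → Fin r × Fin r, _‖
      ≤ ∑ k ∈ Finset.Icc 1 (r - 1), ‖∑ nm : Fin k → Fin r × Fin r,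
        if (∀ i, 0 < ((nm i).1 : ℕ) + ((nm i).2 : ℕ)) then
          bchCoeff (List.ofFn fun i => (((nm i).1 : ℕ), ((nm i).2 : ℕ))) •
            dwr br a z (List.ofFn fun i => (((nm i).1 : ℕ), ((nm i).2 : ℕ))) v
        else 0‖ := norm_sum_le _ _
  _ ≤ ∑ k ∈ Finset.Icc 1 (r - 1), ∑ nm : Fin k → Fin r × Fin r,
        (|bchCoeff (List.ofFn fun i => (((nm i).1 : ℕ), ((nm i).2 : ℕ)))| *
          KL (List.ofFn fun i => (((nm i).1 : ℕ), ((nm i).2 : ℕ)))) * ‖v‖ := by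
      refine Finset.sum_le_sum fun k _ => (norm_sum_le _ _).trans (Finset.sum_le_sum fun nm _ => ?_)
      by_cases hcond : (∀ i, 0 < ((nm i).1 : ℕ) + ((nm i).2 : ℕ))
      · simp only [if_pos hcond, norm_smul, Real.norm_eq_abs]
        rw [mul_assoc]
        refine mul_le_mul_of_nonneg_left ?_ (abs_nonneg _)
        exact (hKL _ a z ha hz).2 v
      · simp only [if_neg hcond, norm_zero]
        exact mul_nonneg (mul_nonneg (abs_nonneg _) (hKL0 _)) (norm_nonneg _)
  _ = (∑ k ∈ Finset.Icc 1 (r - 1), ∑ nm : Fin k → Fin r × Fin r,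
        |bchCoeff (List.ofFn fun i => (((nm i).1 : ℕ), ((nm i).2 : ℕ)))| *
          KL (List.ofFn fun i => (((nm i).1 : ℕ), ((nm i).2 : ℕ)))) * ‖v‖ := by
      rw [Finset.sum_mul]
      refine Finset.sum_congr rfl fun k _ => ?_
      rw [Finset.sum_mul]

theorem NOp_cont {α : Type*} [TopologicalSpace α] (hB : ∀ x y : H, B x y = br x y)
    (hcont : Continuous fun p : H × H => br p.1 p.2) (r : ℕ)
    {A Z V : α → H} (hA : Continuous A) (hZ : Continuous Z) (hV : Continuous V) :
    Continuous fun q => NOp br B r (A q) (Z q) (V q) := by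
  have heq : (fun q => NOp br B r (A q) (Z q) (V q))
      = fun q => ∑ k ∈ Finset.Icc 1 (r - 1), ∑ nm : Fin k → Fin r × Fin r,
        if (∀ i, 0 < ((nm i).1 : ℕ) + ((nm i).2 : ℕ)) then
          bchCoeff (List.ofFn fun i => (((nm i).1 : ℕ), ((nm i).2 : ℕ))) •
            dwr br (A q) (Z q) (List.ofFn fun i => (((nm i).1 : ℕ), ((nm i).2 : ℕ))) (V q)
        else 0 := by
    funext q
    exact NOp_apply br B hB r (A q) (Z q) (V q)
  rw [heq]
  refine continuous_finset_sum _ fun k _ => continuous_finset_sum _ fun nm _ => ?_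
  by_cases hcond : (∀ i, 0 < ((nm i).1 : ℕ) + ((nm i).2 : ℕ))
  · simp only [if_pos hcond]
    exact (cont_dwr br hcont hA hZ hV _).const_smul _
  · simp only [if_neg hcond]
    exact continuous_const

theorem NOp_pow_zero (hB : ∀ x y : H, B x y = br x y)
    (halt : ∀ x : H, br x x = 0)
    (hjac : ∀ x y z : H, br x (br y z) = br (br x y) z + br y (br x z))
    (r : ℕ) (hnil : ∀ (x : H) (l : List H), l.length = r → brFold br (x :: l) = 0)
    (a z : H) : (NOp br B r a z) ^ r = 0 := by
  have key : ∀ (k : ℕ) (v : H), ((NOp br B r a z) ^ k) v ∈ J br (k + 1) := by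
    intro k
    induction k with
    | zero => intro v; simpa using mem_J_one br v
    | succ k ih =>
      intro v
      rw [pow_succ']
      rw [ContinuousLinearMap.mul_apply]
      exact NOp_mem br B hB halt hjac r a z (ih v)
  ext v
  have := key r v
  rw [ContinuousLinearMap.zero_apply]
  exact J_bot br r hnil this

theorem NOp_inv_bound (hB : ∀ x y : H, B x y = br x y)
    (halt : ∀ x : H, br x x = 0)
    (hjac : ∀ x y z : H, br x (br y z) = br (br x y) z + br y (br x z))
    {C : ℝ} (hC0 : 0 ≤ C) (hC : ∀ x y, ‖br x y‖ ≤ C * ‖x‖ * ‖y‖)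
    (r : ℕ) (hnil : ∀ (x : H) (l : List H), l.length = r → brFold br (x :: l) = 0)
    {R : ℝ} (hR : 0 ≤ R) :
    ∃ K, 1 ≤ K ∧ ∀ a z v : H, ‖a‖ ≤ R → ‖z‖ ≤ R →
      ‖v‖ ≤ K * ‖v + NOp br B r a z v‖ := by
  obtain ⟨K0, hK00, hK0⟩ := NOp_bound br B hB hC0 hC r hR
  refine ⟨(∑ k ∈ Finset.range r, K0 ^ k) + 1, by
    have : 0 ≤ ∑ k ∈ Finset.range r, K0 ^ k := Finset.sum_nonneg fun k _ => by positivity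
    linarith, ?_⟩
  intro a z v ha hz
  set N := NOp br B r a z with hN
  have hNr : N ^ r = 0 := NOp_pow_zero br B hB halt hjac r hnil a z
  have hgeom : (∑ k ∈ Finset.range r, (-N) ^ k) * (N + 1) = 1 := by
    have h1 := geom_sum_mul (-N) r
    have h2 : (-N) ^ r = 0 := by
      rcases Nat.even_or_odd r with he | ho
      · rw [he.neg_pow, hNr]
      · rw [ho.neg_pow, hNr, neg_zero]
    rw [h2, zero_sub] at h1
    have h5 : (-N) - 1 = -(N + 1) := by abel
    rw [h5, mul_neg] at h1
    exact neg_injective h1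
  have hv : v = (∑ k ∈ Finset.range r, (-N) ^ k) (v + N v) := by
    have h6 : ((∑ k ∈ Finset.range r, (-N) ^ k) * (N + 1)) v = v := by rw [hgeom]; rfl
    rw [ContinuousLinearMap.mul_apply] at h6
    have h7 : (N + 1) v = v + N v := by
      rw [ContinuousLinearMap.add_apply, ContinuousLinearMap.one_apply, add_comm]
    rw [h7] at h6
    exact h6.symm
  set w := v + N v with hw
  have hpow : ∀ k : ℕ, ‖((-N) ^ k) w‖ ≤ K0 ^ k * ‖w‖ := by
    intro k
    induction k with
    | zero => simp
    | succ k ih =>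
      rw [pow_succ', ContinuousLinearMap.mul_apply]
      have : ‖(-N) (((-N) ^ k) w)‖ = ‖N (((-N) ^ k) w)‖ := by
        rw [ContinuousLinearMap.neg_apply, norm_neg]
      rw [this]
      calc ‖N (((-N) ^ k) w)‖ ≤ K0 * ‖((-N) ^ k) w‖ := hK0 a z _ ha hz
      _ ≤ K0 * (K0 ^ k * ‖w‖) := mul_le_mul_of_nonneg_left ih hK00
      _ = K0 ^ (k+1) * ‖w‖ := by ring
  calc ‖v‖ = ‖(∑ k ∈ Finset.range r, (-N) ^ k) w‖ := by rw [← hv]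
  _ ≤ ∑ k ∈ Finset.range r, ‖((-N) ^ k) w‖ := by
      rw [ContinuousLinearMap.sum_apply]
      exact norm_sum_le _ _
  _ ≤ ∑ k ∈ Finset.range r, K0 ^ k * ‖w‖ := Finset.sum_le_sum fun k _ => hpow k
  _ = (∑ k ∈ Finset.range r, K0 ^ k) * ‖w‖ := by rw [Finset.sum_mul]
  _ ≤ ((∑ k ∈ Finset.range r, K0 ^ k) + 1) * ‖w‖ := by
      have : (0:ℝ) ≤ ‖w‖ := norm_nonneg _
      nlinarith

end RD

namespace RD2
open RD

variable {H : Type*} [NormedAddCommGroup H] [InnerProductSpace ℝ H] [CompleteSpace H]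
variable (br : H →ₗ[ℝ] H →ₗ[ℝ] H) (B : H →L[ℝ] H →L[ℝ] H)

theorem fderiv_eq (hB : ∀ x y : H, B x y = br x y) (r : ℕ) (a z : H) :
    fderiv ℝ (fun y => bchMul r br a y) z = ContinuousLinearMap.id ℝ H + NOp br B r a z :=
  (hasFDerivAt_bchMul br B hB r a z).fderiv

theorem pathLength_eq (hB : ∀ x y : H, B x y = br x y) (r : ℕ) (g : ℝ → H) :
    pathLength r br g
      = ∫ s in (0:ℝ)..1, ‖deriv g s + NOp br B r (-(g s)) (g s) (deriv g s)‖ := by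
  unfold pathLength
  apply intervalIntegral.integral_congr
  intro s _
  dsimp only
  rw [fderiv_eq br B hB r (-(g s)) (g s)]
  rw [ContinuousLinearMap.add_apply, ContinuousLinearMap.id_apply]

set_option maxHeartbeats 1000000 in
theorem phi_cont (hB : ∀ x y : H, B x y = br x y)
    (hcont : Continuous fun p : H × H => br p.1 p.2) (r : ℕ) {g : ℝ → H}
    (hg : ContDiff ℝ 1 g) :
    Continuous fun s => ‖deriv g s + NOp br B r (-(g s)) (g s) (deriv g s)‖ := by
  have h1 : Continuous (deriv g) := hg.continuous_deriv le_rfl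
  have h2 : Continuous fun s => NOp br B r (-(g s)) (g s) (deriv g s) :=
    NOp_cont br B hB hcont r hg.continuous.neg hg.continuous h1
  exact (h1.add h2).norm

theorem pathLength_nonneg (r : ℕ) (g : ℝ → H) : 0 ≤ pathLength r br g := by
  unfold pathLength
  apply intervalIntegral.integral_nonneg (by norm_num)
  intro s _
  exact norm_nonneg _

theorem line_contDiff (x y : H) : ContDiff ℝ 1 (fun s : ℝ => x + s • (y - x)) :=
  contDiff_const.add (contDiff_id.smul contDiff_const)

theorem line_hasDerivAt (x y : H) (s : ℝ) :
    HasDerivAt (fun t : ℝ => x + t • (y - x)) (y - x) s := by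
  have := ((hasDerivAt_id s).smul_const (y - x)).const_add x
  simpa using this

theorem dist_set_nonempty (r : ℕ) (x y : H) :
    {c : ℝ | ∃ g : ℝ → H, ContDiff ℝ 1 g ∧ g 0 = x ∧ g 1 = y ∧ c = pathLength r br g}.Nonempty := by
  refine ⟨pathLength r br (fun s : ℝ => x + s • (y - x)),
    (fun s : ℝ => x + s • (y - x)), line_contDiff x y, by simp, by simp, rfl⟩

theorem dist_set_bddBelow (r : ℕ) (x y : H) :
    BddBelow {c : ℝ | ∃ g : ℝ → H, ContDiff ℝ 1 g ∧ g 0 = x ∧ g 1 = y ∧ c = pathLength r br g} := by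
  refine ⟨0, fun c hc => ?_⟩
  obtain ⟨g, _, _, _, rfl⟩ := hc
  exact pathLength_nonneg br r g

theorem partA (hB : ∀ x y : H, B x y = br x y)
    (hcont : Continuous fun p : H × H => br p.1 p.2)
    {C : ℝ} (hC0 : 0 ≤ C) (hC : ∀ x y, ‖br x y‖ ≤ C * ‖x‖ * ‖y‖) (r : ℕ) :
    ∀ x : H, ∀ ε : ℝ, 0 < ε → ∃ δ > 0, ∀ y : H, ‖y - x‖ < δ → rDist r br x y < ε := by
  intro x ε hε
  obtain ⟨K, hK0, hK⟩ := NOp_bound br B hB hC0 hC r (R := ‖x‖ + 1) (by positivity)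
  refine ⟨min 1 (ε / (2 * (K + 1))), lt_min one_pos (by positivity), fun y hy => ?_⟩
  set g : ℝ → H := fun s : ℝ => x + s • (y - x) with hgdef
  have hderiv : deriv g = fun _ => y - x := funext fun s => (line_hasDerivAt x y s).deriv
  have hmem : pathLength r br g ∈
      {c : ℝ | ∃ g : ℝ → H, ContDiff ℝ 1 g ∧ g 0 = x ∧ g 1 = y ∧ c = pathLength r br g} :=
    ⟨g, line_contDiff x y, by simp [hgdef], by simp [hgdef], rfl⟩
  have hle : rDist r br x y ≤ pathLength r br g :=
    csInf_le (dist_set_bddBelow br r x y) hmem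
  have hyx1 : ‖y - x‖ ≤ 1 := le_trans hy.le (min_le_left _ _)
  have hgle : ∀ s ∈ Set.Icc (0:ℝ) 1, ‖g s‖ ≤ ‖x‖ + 1 := by
    intro s hs
    have h1 : ‖g s‖ ≤ ‖x‖ + ‖s • (y - x)‖ := norm_add_le x _
    rw [norm_smul, Real.norm_eq_abs] at h1
    have habs : |s| ≤ 1 := abs_le.mpr ⟨by linarith [hs.1], hs.2⟩
    nlinarith [norm_nonneg (y - x), abs_nonneg s]
  have hpl : pathLength r br g ≤ (K + 1) * ‖y - x‖ := by
    rw [pathLength_eq br B hB r g]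
    have hφc := phi_cont br B hB hcont r (line_contDiff x y)
    calc (∫ s in (0:ℝ)..1, ‖deriv g s + NOp br B r (-(g s)) (g s) (deriv g s)‖)
        ≤ ∫ _ in (0:ℝ)..1, (K + 1) * ‖y - x‖ := by
          apply intervalIntegral.integral_mono_on (by norm_num)
            (hφc.intervalIntegrable 0 1) intervalIntegrable_const
          intro s hs
          rw [hderiv]
          have hb := hK (-(g s)) (g s) (y - x) (by rw [norm_neg]; exact hgle s hs) (hgle s hs)
          calc ‖(y - x) + NOp br B r (-(g s)) (g s) (y - x)‖
              ≤ ‖y - x‖ + ‖NOp br B r (-(g s)) (g s) (y - x)‖ := norm_add_le _ _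
          _ ≤ ‖y - x‖ + K * ‖y - x‖ := by linarith [hb]
          _ = (K + 1) * ‖y - x‖ := by ring
    _ = (K + 1) * ‖y - x‖ := by simp
  have hyx2 : ‖y - x‖ < ε / (2 * (K + 1)) := lt_of_lt_of_le hy (min_le_right _ _)
  have : (K + 1) * ‖y - x‖ < ε := by
    have hK1 : (0:ℝ) < K + 1 := by linarith
    have := (mul_lt_mul_of_pos_left hyx2 hK1)
    have heq : (K + 1) * (ε / (2 * (K + 1))) = ε / 2 := by field_simp
    rw [heq] at this
    linarith
  linarith

theorem partB (hB : ∀ x y : H, B x y = br x y)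
    (hcont : Continuous fun p : H × H => br p.1 p.2)
    (halt : ∀ x : H, br x x = 0)
    (hjac : ∀ x y z : H, br x (br y z) = br (br x y) z + br y (br x z))
    {C : ℝ} (hC0 : 0 ≤ C) (hC : ∀ x y, ‖br x y‖ ≤ C * ‖x‖ * ‖y‖)
    (r : ℕ) (hnil : ∀ (x : H) (l : List H), l.length = r → brFold br (x :: l) = 0) :
    ∀ x : H, ∀ δ : ℝ, 0 < δ → ∃ ε > 0, ∀ y : H, rDist r br x y < ε → ‖y - x‖ < δ := by
  intro x δ hδ
  have hR : (0:ℝ) ≤ ‖x‖ + δ := by positivity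
  obtain ⟨K, hK1, hK⟩ := NOp_inv_bound br B hB halt hjac hC0 hC r hnil hR
  have hKpos : (0:ℝ) < K := lt_of_lt_of_le one_pos hK1
  refine ⟨δ / (2 * K), by positivity, fun y hrd => ?_⟩
  have hsinf : rDist r br x y
      = sInf {c : ℝ | ∃ g : ℝ → H, ContDiff ℝ 1 g ∧ g 0 = x ∧ g 1 = y ∧ c = pathLength r br g} := rfl
  rw [hsinf] at hrd
  obtain ⟨c, hcS, hclt⟩ := (csInf_lt_iff (dist_set_bddBelow br r x y)
    (dist_set_nonempty br r x y)).mp hrd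
  obtain ⟨g, hg, hg0, hg1, rfl⟩ := hcS
  by_contra hcon
  push_neg at hcon
  have hgc : Continuous g := hg.continuous
  set E := Set.Icc (0:ℝ) 1 ∩ {t : ℝ | δ ≤ ‖g t - x‖} with hEdef
  have hEc : IsClosed E :=
    isClosed_Icc.inter (isClosed_le continuous_const ((hgc.sub continuous_const).norm))
  have hEne : E.Nonempty := ⟨1, ⟨by norm_num, by show δ ≤ ‖g 1 - x‖; rw [hg1]; exact hcon⟩⟩
  have hEb : BddBelow E := ⟨0, fun t ht => ht.1.1⟩
  set T := sInf E with hTdef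
  have hTE : T ∈ E := hEc.csInf_mem hEne hEb
  have hT0 : 0 ≤ T := hTE.1.1
  have hT1 : T ≤ 1 := hTE.1.2
  have hTd : δ ≤ ‖g T - x‖ := hTE.2
  have hTpos : 0 < T := by
    rcases lt_or_eq_of_le hT0 with h | h
    · exact h
    · exfalso
      have := hTd
      rw [← h, hg0] at this
      simp at this
      linarith
  have hlt : ∀ s, 0 ≤ s → s < T → ‖g s - x‖ < δ := by
    intro s hs0 hsT
    by_contra hge
    push_neg at hge
    have hsE : s ∈ E := ⟨⟨hs0, hsT.le.trans hT1⟩, hge⟩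
    exact absurd hsT (not_lt.mpr (csInf_le hEb hsE))
  have hTle : ‖g T - x‖ ≤ δ := by
    have htend : Filter.Tendsto (fun s => ‖g s - x‖) (nhdsWithin T (Set.Iio T))
        (nhds ‖g T - x‖) :=
      (((hgc.sub continuous_const).norm).tendsto T).mono_left nhdsWithin_le_nhds
    refine le_of_tendsto htend ?_
    filter_upwards [Ioo_mem_nhdsLT_of_mem (⟨hTpos, le_refl T⟩ : T ∈ Set.Ioc 0 T)] with s hs
    exact (hlt s hs.1.le hs.2).le
  have hgs_bound : ∀ s ∈ Set.Icc (0:ℝ) T, ‖g s‖ ≤ ‖x‖ + δ := by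
    intro s hs
    have h1 : ‖g s‖ ≤ ‖g s - x‖ + ‖x‖ := by
      have := norm_add_le (g s - x) x
      simpa using this
    rcases lt_or_eq_of_le hs.2 with h | h
    · have := hlt s hs.1 h
      linarith
    · rw [h]
      have := hTle
      have h2 : ‖g T‖ ≤ ‖g T - x‖ + ‖x‖ := by
        have := norm_add_le (g T - x) x
        simpa using this
      linarith
  have hgd : Continuous (deriv g) := hg.continuous_deriv le_rfl
  have hφc := phi_cont br B hB hcont r hg
  have hφnn : ∀ s : ℝ, 0 ≤ ‖deriv g s + NOp br B r (-(g s)) (g s) (deriv g s)‖ :=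
    fun s => norm_nonneg _
  have hlow : ∀ s ∈ Set.Icc (0:ℝ) T,
      K⁻¹ * ‖deriv g s‖ ≤ ‖deriv g s + NOp br B r (-(g s)) (g s) (deriv g s)‖ := by
    intro s hs
    have hb := hK (-(g s)) (g s) (deriv g s) (by rw [norm_neg]; exact hgs_bound s hs)
      (hgs_bound s hs)
    rw [inv_mul_le_iff₀ hKpos]
    exact hb
  have h2 : (∫ s in (0:ℝ)..T, ‖deriv g s + NOp br B r (-(g s)) (g s) (deriv g s)‖)
      ≤ ∫ s in (0:ℝ)..1, ‖deriv g s + NOp br B r (-(g s)) (g s) (deriv g s)‖ := by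
    rw [← intervalIntegral.integral_add_adjacent_intervals
      (hφc.intervalIntegrable 0 T) (hφc.intervalIntegrable T 1)]
    have h0 : 0 ≤ ∫ s in T..1, ‖deriv g s + NOp br B r (-(g s)) (g s) (deriv g s)‖ :=
      intervalIntegral.integral_nonneg hT1 fun u _ => hφnn u
    linarith
  have h3 : K⁻¹ * ∫ s in (0:ℝ)..T, ‖deriv g s‖
      ≤ ∫ s in (0:ℝ)..T, ‖deriv g s + NOp br B r (-(g s)) (g s) (deriv g s)‖ := by
    rw [← intervalIntegral.integral_const_mul]
    exact intervalIntegral.integral_mono_on hT0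
      ((continuous_const.mul hgd.norm).intervalIntegrable _ _)
      (hφc.intervalIntegrable _ _) hlow
  have h4 : ‖g T - g 0‖ ≤ ∫ s in (0:ℝ)..T, ‖deriv g s‖ := by
    have hftc : (∫ s in (0:ℝ)..T, deriv g s) = g T - g 0 :=
      intervalIntegral.integral_deriv_eq_sub
        (fun u _ => (hg.differentiable one_ne_zero).differentiableAt)
        (hgd.intervalIntegrable _ _)
    rw [← hftc]
    exact intervalIntegral.norm_integral_le_integral_norm hT0
  have h5 : δ ≤ ‖g T - g 0‖ := by rw [hg0]; exact hTd
  have h6 : K⁻¹ * δ ≤ pathLength r br g := by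
    rw [pathLength_eq br B hB r g]
    have h7 : K⁻¹ * δ ≤ K⁻¹ * ∫ s in (0:ℝ)..T, ‖deriv g s‖ :=
      mul_le_mul_of_nonneg_left (h5.trans h4) (inv_nonneg.mpr hKpos.le)
    linarith
  have hfin : K⁻¹ * δ < δ / (2 * K) := lt_of_le_of_lt h6 hclt
  rw [inv_mul_eq_div, div_lt_div_iff₀ hKpos (by positivity)] at hfin
  nlinarith

end RD2

/-- The topology induced on `H` by the Riemannian distance `d` coincides with
the Hilbert norm topology: a set is open for `d` iff it is open for `‖·‖`. -/
theorem rDist_topology_eq_norm_topology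
    {H : Type*} [NormedAddCommGroup H] [InnerProductSpace ℝ H] [CompleteSpace H]
    (br : H →ₗ[ℝ] H →ₗ[ℝ] H)
    (hcont : Continuous fun p : H × H => br p.1 p.2)
    (halt : ∀ x : H, br x x = 0)
    (hjac : ∀ x y z : H, br x (br y z) = br (br x y) z + br y (br x z))
    (e : HilbertBasis ℕ ℝ H)
    (hHS : Summable fun p : ℕ × ℕ => ‖br (e p.1) (e p.2)‖ ^ 2)
    (r : ℕ)
    (hnil : ∀ (x : H) (l : List H), l.length = r → brFold br (x :: l) = 0) :
    ∀ U : Set H,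
      (∀ x ∈ U, ∃ ε > 0, ∀ y : H, rDist r br x y < ε → y ∈ U) ↔ IsOpen U := by
  intro U
  obtain ⟨C, hC0, hC⟩ := RD.exists_bound br hcont
  set B := LinearMap.mkContinuous₂ br C hC with hBdef
  have hB : ∀ x y : H, B x y = br x y := fun x y => rfl
  constructor
  · intro hU
    rw [Metric.isOpen_iff]
    intro x hx
    obtain ⟨ε, hε, hball⟩ := hU x hx
    obtain ⟨δ, hδ, hδb⟩ := RD2.partA br B hB hcont hC0 hC r x ε hε
    refine ⟨δ, hδ, fun y hy => ?_⟩
    apply hball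
    apply hδb
    rwa [Metric.mem_ball, dist_eq_norm] at hy
  · intro hU x hx
    obtain ⟨δ, hδ, hball⟩ := Metric.isOpen_iff.mp hU x hx
    obtain ⟨ε, hε, hεb⟩ := RD2.partB br B hB hcont halt hjac hC0 hC r hnil x δ hδ
    refine ⟨ε, hε, fun y hy => ?_⟩
    apply hball
    rw [Metric.mem_ball, dist_eq_norm]
    exact hεb y hy
end

section
/- Let π₀ be an orthogonal projection of H onto a finite-dimensional subspace and let φ : [0,1] → H be a C¹ path with φ(0) = 0. Then there exists an increasing sequence (π_n)_{n≥1} of orthogonal projections of H onto finite-dimensional Lie subalgebras of H such that the range of π₀ is contained in the range of each π_n, π_n converges strongly to the identity on H, and ℓ(π_n ∘ φ) → ℓ(φ) as n → ∞. -/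
open scoped Classical

open scoped RealInnerProductSpace

/-- `P : H → H` is an orthogonal projection: idempotent and self-adjoint. -/
def IsOrthProj {H : Type*} [NormedAddCommGroup H] [InnerProductSpace ℝ H]
    (P : H →L[ℝ] H) : Prop :=
  (∀ x, P (P x) = P x) ∧ ∀ x y, ⟪P x, y⟫ = ⟪x, P y⟫


set_option linter.unusedSectionVars false


section Bilin
variable {H : Type*} [NormedAddCommGroup H] [NormedSpace ℝ H]

lemma bilin_bound (br : H →ₗ[ℝ] H →ₗ[ℝ] H)
    (hcont : Continuous fun p : H × H => br p.1 p.2) :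
    ∃ C : ℝ, 0 ≤ C ∧ ∀ x y, ‖br x y‖ ≤ C * ‖x‖ * ‖y‖ := by
  have h0 : ContinuousAt (fun p : H × H => br p.1 p.2) (0, 0) := hcont.continuousAt
  rw [Metric.continuousAt_iff] at h0
  obtain ⟨δ, hδ, hball⟩ := h0 1 one_pos
  have key : ∀ x y : H, ‖x‖ < δ → ‖y‖ < δ → ‖br x y‖ ≤ 1 := by
    intro x y hx hy
    have : dist ((x, y) : H × H) (0, 0) < δ := by
      rw [Prod.dist_eq]
      simp only [dist_zero_right]
      exact max_lt hx hy
    have := hball this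
    simp only [map_zero, LinearMap.zero_apply, dist_zero_right] at this
    exact this.le
  refine ⟨4 / δ ^ 2, by positivity, fun x y => ?_⟩
  rcases eq_or_ne x 0 with rfl | hx
  · simp
  rcases eq_or_ne y 0 with rfl | hy
  · simp
  have hxn : (0:ℝ) < ‖x‖ := norm_pos_iff.2 hx
  have hyn : (0:ℝ) < ‖y‖ := norm_pos_iff.2 hy
  set x' : H := (δ / (2 * ‖x‖)) • x with hx'
  set y' : H := (δ / (2 * ‖y‖)) • y with hy'
  have hx'n : ‖x'‖ < δ := by
    rw [hx', norm_smul, Real.norm_eq_abs, abs_of_pos (by positivity)]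
    rw [div_mul_eq_mul_div, mul_comm]
    rw [div_lt_iff₀ (by positivity)]
    nlinarith
  have hy'n : ‖y'‖ < δ := by
    rw [hy', norm_smul, Real.norm_eq_abs, abs_of_pos (by positivity)]
    rw [div_mul_eq_mul_div, mul_comm]
    rw [div_lt_iff₀ (by positivity)]
    nlinarith
  have hb := key x' y' hx'n hy'n
  have hexp : br x' y' = ((δ / (2 * ‖x‖)) * (δ / (2 * ‖y‖))) • br x y := by
    rw [hx', hy']
    simp only [map_smul, LinearMap.smul_apply, smul_smul]
    ring_nf
  rw [hexp, norm_smul, Real.norm_eq_abs, abs_of_pos (by positivity)] at hb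
  have hpos : (0:ℝ) < δ / (2 * ‖x‖) * (δ / (2 * ‖y‖)) := by positivity
  rw [← le_div_iff₀' hpos] at hb
  calc ‖br x y‖ ≤ 1 / (δ / (2 * ‖x‖) * (δ / (2 * ‖y‖))) := hb
    _ = 4 / δ ^ 2 * ‖x‖ * ‖y‖ := by field_simp; ring

end Bilin
set_option linter.unusedSectionVars false

open scoped Classical

section Smooth
variable {H : Type*} [NormedAddCommGroup H] [NormedSpace ℝ H]
variable {E : Type*} [NormedAddCommGroup E] [NormedSpace ℝ E]

/-- Lipschitz on every ball, with plain real constants. -/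
def LipBall (f : E → H) : Prop :=
  ∀ R : ℝ, ∃ C : ℝ, 0 ≤ C ∧ ∀ p q : E, ‖p‖ ≤ R → ‖q‖ ≤ R → ‖f p - f q‖ ≤ C * ‖p - q‖

lemma LipBall.const (c : H) : LipBall (fun _ : E => c) :=
  fun _ => ⟨0, le_rfl, fun p q _ _ => by simp⟩

lemma LipBall.clm (T : E →L[ℝ] H) : LipBall (fun p => T p) :=
  fun _ => ⟨‖T‖, norm_nonneg _, fun p q _ _ => by
    rw [← map_sub]; exact T.le_opNorm _⟩

lemma LipBall.add {f g : E → H} (hf : LipBall f) (hg : LipBall g) :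
    LipBall (fun p => f p + g p) := by
  intro R
  obtain ⟨C, hC, hCf⟩ := hf R
  obtain ⟨D, hD, hDg⟩ := hg R
  refine ⟨C + D, by positivity, fun p q hp hq => ?_⟩
  have : f p + g p - (f q + g q) = (f p - f q) + (g p - g q) := by abel
  rw [this, add_mul]
  exact (norm_add_le _ _).trans (add_le_add (hCf p q hp hq) (hDg p q hp hq))

lemma LipBall.smul (c : ℝ) {f : E → H} (hf : LipBall f) : LipBall (fun p => c • f p) := by
  intro R
  obtain ⟨C, hC, hCf⟩ := hf R
  refine ⟨|c| * C, by positivity, fun p q hp hq => ?_⟩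
  rw [← smul_sub, norm_smul, Real.norm_eq_abs, mul_assoc]
  exact mul_le_mul_of_nonneg_left (hCf p q hp hq) (abs_nonneg c)

lemma LipBall.norm_le {f : E → H} (hf : LipBall f) (R : ℝ) (hR : 0 ≤ R) :
    ∃ A : ℝ, 0 ≤ A ∧ ∀ p : E, ‖p‖ ≤ R → ‖f p‖ ≤ A := by
  obtain ⟨C, hC, hCf⟩ := hf R
  refine ⟨‖f 0‖ + C * R, by positivity, fun p hp => ?_⟩
  calc ‖f p‖ ≤ ‖f p - f 0‖ + ‖f 0‖ := by
        have := norm_sub_norm_le (f p) (f 0)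
        linarith [norm_nonneg (f 0)]
    _ ≤ C * ‖p - 0‖ + ‖f 0‖ := by
        exact add_le_add (hCf p 0 hp (by simpa using hR)) le_rfl
    _ ≤ C * R + ‖f 0‖ := by
        have : ‖p - 0‖ ≤ R := by simpa using hp
        exact add_le_add (mul_le_mul_of_nonneg_left this hC) le_rfl
    _ = ‖f 0‖ + C * R := by ring

lemma LipBall.bilin (B : H →L[ℝ] H →L[ℝ] H) {u v : E → H}
    (hu : LipBall u) (hv : LipBall v) : LipBall (fun p => B (u p) (v p)) := by
  intro R
  rcases le_or_gt R 0 with hR | hR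
  · -- ball of radius R ≤ 0 : at most one point when R < 0 it's empty-ish; handle directly
    rcases hu R with ⟨Cu, hCu, hu'⟩
    rcases hv R with ⟨Cv, hCv, hv'⟩
    refine ⟨0, le_rfl, fun p q hp hq => ?_⟩
    have hp0 : ‖p‖ = 0 := le_antisymm (hp.trans hR) (norm_nonneg _)
    have hq0 : ‖q‖ = 0 := le_antisymm (hq.trans hR) (norm_nonneg _)
    have : p = q := by
      rw [norm_eq_zero] at hp0 hq0; rw [hp0, hq0]
    simp [this]
  obtain ⟨Cu, hCu, hu'⟩ := hu R
  obtain ⟨Cv, hCv, hv'⟩ := hv R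
  obtain ⟨Au, hAu, hu''⟩ := hu.norm_le R hR.le
  obtain ⟨Av, hAv, hv''⟩ := hv.norm_le R hR.le
  refine ⟨‖B‖ * Au * Cv + ‖B‖ * Cu * Av, by positivity, fun p q hp hq => ?_⟩
  have key : B (u p) (v p) - B (u q) (v q)
      = B (u p) (v p - v q) + B (u p - u q) (v q) := by
    simp only [map_sub, ContinuousLinearMap.sub_apply, ContinuousLinearMap.map_sub]
    abel
  rw [key]
  refine (norm_add_le _ _).trans ?_
  have h1 : ‖B (u p) (v p - v q)‖ ≤ ‖B‖ * Au * (Cv * ‖p - q‖) := by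
    calc ‖B (u p) (v p - v q)‖ ≤ ‖B‖ * ‖u p‖ * ‖v p - v q‖ := B.le_opNorm₂ _ _
      _ ≤ ‖B‖ * Au * (Cv * ‖p - q‖) := by
          have := hu'' p hp
          have := hv' p q hp hq
          gcongr
  have h2 : ‖B (u p - u q) (v q)‖ ≤ ‖B‖ * (Cu * ‖p - q‖) * Av := by
    calc ‖B (u p - u q) (v q)‖ ≤ ‖B‖ * ‖u p - u q‖ * ‖v q‖ := B.le_opNorm₂ _ _
      _ ≤ ‖B‖ * (Cu * ‖p - q‖) * Av := by
          have := hu' p q hp hq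
          have := hv'' q hq
          gcongr
  calc ‖B (u p) (v p - v q)‖ + ‖B (u p - u q) (v q)‖
      ≤ ‖B‖ * Au * (Cv * ‖p - q‖) + ‖B‖ * (Cu * ‖p - q‖) * Av := add_le_add h1 h2
    _ = (‖B‖ * Au * Cv + ‖B‖ * Cu * Av) * ‖p - q‖ := by ring

lemma ContDiff.bilin (B : H →L[ℝ] H →L[ℝ] H) {u v : E → H}
    (hu : ContDiff ℝ (⊤ : ℕ∞) u) (hv : ContDiff ℝ (⊤ : ℕ∞) v) :
    ContDiff ℝ (⊤ : ℕ∞) (fun p => B (u p) (v p)) :=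
  B.isBoundedBilinearMap.contDiff.comp (hu.prodMk hv)

end Smooth
section Word
variable {H : Type*} [NormedAddCommGroup H] [NormedSpace ℝ H]
variable {E : Type*} [NormedAddCommGroup E] [NormedSpace ℝ E]
variable (br : H →ₗ[ℝ] H →ₗ[ℝ] H) (B : H →L[ℝ] H →L[ℝ] H) (hB : ∀ x y, B x y = br x y)

lemma LipBall.sum {ι : Type*} (s : Finset ι) (f : ι → E → H)
    (h : ∀ i ∈ s, LipBall (f i)) : LipBall (fun p => ∑ i ∈ s, f i p) := by
  classical
  induction s using Finset.induction_on with
  | empty => simpa using LipBall.const (0 : H)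
  | insert a s hx ih =>
    simp only [Finset.sum_insert hx]
    exact (h a (Finset.mem_insert_self a s)).add
      (ih fun i hi => h i (Finset.mem_insert_of_mem hi))

include hB in
lemma contDiff_iter (a : ℕ) {u v : E → H} (hu : ContDiff ℝ (⊤ : ℕ∞) u) (hv : ContDiff ℝ (⊤ : ℕ∞) v) :
    ContDiff ℝ (⊤ : ℕ∞) (fun p => (fun y => br (u p) y)^[a] (v p)) := by
  induction a with
  | zero => simpa using hv
  | succ n ih =>
    have heq : (fun p => (fun y => br (u p) y)^[n+1] (v p))
        = fun p => B (u p) ((fun y => br (u p) y)^[n] (v p)) := by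
      funext p; rw [Function.iterate_succ_apply', hB]
    rw [heq]; exact ContDiff.bilin B hu ih

include hB in
lemma lipBall_iter (a : ℕ) {u v : E → H} (hu : LipBall u) (hv : LipBall v) :
    LipBall (fun p => (fun y => br (u p) y)^[a] (v p)) := by
  induction a with
  | zero => simpa using hv
  | succ n ih =>
    have heq : (fun p => (fun y => br (u p) y)^[n+1] (v p))
        = fun p => B (u p) ((fun y => br (u p) y)^[n] (v p)) := by
      funext p; rw [Function.iterate_succ_apply', hB]
    rw [heq]; exact LipBall.bilin B hu ih

include hB in
lemma contDiff_word (l : List (ℕ × ℕ)) :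
    ContDiff ℝ (⊤ : ℕ∞) (fun p : H × H => bchWord br p.1 p.2 l) := by
  induction l with
  | nil => exact contDiff_fst
  | cons ab rest ih =>
    obtain ⟨a, b⟩ := ab
    show ContDiff ℝ (⊤ : ℕ∞) (fun p : H × H =>
      (fun y => br p.1 y)^[a] ((fun y => br p.2 y)^[b] (bchWord br p.1 p.2 rest)))
    exact contDiff_iter br B hB a contDiff_fst (contDiff_iter br B hB b contDiff_snd ih)

include hB in
lemma lipBall_word (l : List (ℕ × ℕ)) :
    LipBall (fun p : H × H => bchWord br p.1 p.2 l) := by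
  induction l with
  | nil => exact LipBall.clm (ContinuousLinearMap.fst ℝ H H)
  | cons ab rest ih =>
    obtain ⟨a, b⟩ := ab
    show LipBall (fun p : H × H =>
      (fun y => br p.1 y)^[a] ((fun y => br p.2 y)^[b] (bchWord br p.1 p.2 rest)))
    exact lipBall_iter br B hB a (LipBall.clm (ContinuousLinearMap.fst ℝ H H))
      (lipBall_iter br B hB b (LipBall.clm (ContinuousLinearMap.snd ℝ H H)) ih)

include hB in
lemma contDiff_bchMul (r : ℕ) :
    ContDiff ℝ (⊤ : ℕ∞) (fun p : H × H => bchMul r br p.1 p.2) := by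
  unfold bchMul
  refine (contDiff_fst.add contDiff_snd).add ?_
  apply ContDiff.sum; intro k _
  apply ContDiff.sum; intro nm _
  by_cases hc : ∀ i, 0 < ((nm i).1 : ℕ) + ((nm i).2 : ℕ)
  · simp only [if_pos hc]
    exact (contDiff_word br B hB _).const_smul _
  · simp only [if_neg hc]; exact contDiff_const

include hB in
lemma lipBall_bchMul (r : ℕ) :
    LipBall (fun p : H × H => bchMul r br p.1 p.2) := by
  unfold bchMul
  refine LipBall.add (LipBall.add (LipBall.clm (ContinuousLinearMap.fst ℝ H H))
    (LipBall.clm (ContinuousLinearMap.snd ℝ H H))) ?_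
  apply LipBall.sum; intro k _
  apply LipBall.sum; intro nm _
  by_cases hc : ∀ i, 0 < ((nm i).1 : ℕ) + ((nm i).2 : ℕ)
  · simp only [if_pos hc]
    exact (lipBall_word br B hB _).smul _
  · simp only [if_neg hc]; exact LipBall.const 0

end Word

section Algebra
variable {H : Type*} [AddCommGroup H] [Module ℝ H]
variable (br : H →ₗ[ℝ] H →ₗ[ℝ] H)

/-- Set of left-normed bracket monomials with letters in `F`. -/
def Mono (F : Set H) : Set H :=
  {z | ∃ l : List H, l ≠ [] ∧ (∀ x ∈ l, x ∈ F) ∧ brFold br l = z}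

lemma brFold_singleton (x : H) : brFold br [x] = x := rfl

lemma brFold_cons_concat (y : H) (ys : List H) (c : H) :
    brFold br ((y :: ys) ++ [c]) = br (brFold br (y :: ys)) c := by
  simp [brFold, List.foldl_append]

lemma subset_mono (F : Set H) : F ⊆ Mono br F :=
  fun x hx => ⟨[x], by simp, by simpa using hx, rfl⟩

lemma mono_mono {F F' : Set H} (h : F ⊆ F') : Mono br F ⊆ Mono br F' :=
  fun _ ⟨l, h1, h2, h3⟩ => ⟨l, h1, fun x hx => h (h2 x hx), h3⟩

lemma br_skew (halt : ∀ x : H, br x x = 0) (x y : H) : br x y = -br y x := by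
  have h := halt (x + y)
  simp only [map_add, LinearMap.add_apply, halt, zero_add, add_zero] at h
  exact eq_neg_of_add_eq_zero_left (by rw [add_comm]; exact h)

/-- Bracketing a span element with a single generator stays in the span of monomials. -/
lemma br_span_single (F : Set H) {a : H} (ha : a ∈ Submodule.span ℝ (Mono br F))
    {x : H} (hx : x ∈ F) : br a x ∈ Submodule.span ℝ (Mono br F) := by
  refine Submodule.span_induction (p := fun z _ => br z x ∈ Submodule.span ℝ (Mono br F))
    ?_ ?_ ?_ ?_ ha
  · rintro z ⟨l, hl1, hl2, rfl⟩
    apply Submodule.subset_span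
    obtain ⟨y, ys, rfl⟩ := List.exists_cons_of_ne_nil hl1
    refine ⟨(y :: ys) ++ [x], by simp, ?_, brFold_cons_concat br y ys x⟩
    intro z hz
    rcases List.mem_append.1 hz with h | h
    · exact hl2 z h
    · simp at h; subst h; exact hx
  · simp only [map_zero, LinearMap.zero_apply]
    exact Submodule.zero_mem _
  · intro u v _ _ hu hv
    simp only [map_add, LinearMap.add_apply]
    exact Submodule.add_mem _ hu hv
  · intro c u _ hu
    simp only [map_smul, LinearMap.smul_apply]
    exact Submodule.smul_mem _ _ hu

lemma br_span_mono_list (halt : ∀ x : H, br x x = 0)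
    (hjac : ∀ x y z : H, br x (br y z) = br (br x y) z + br y (br x z))
    (F : Set H) (l : List H) :
    l ≠ [] → (∀ x ∈ l, x ∈ F) →
    ∀ a ∈ Submodule.span ℝ (Mono br F), br a (brFold br l) ∈ Submodule.span ℝ (Mono br F) := by
  induction l using List.reverseRecOn with
  | nil => intro h; exact absurd rfl h
  | append_singleton l' c ih =>
    intro _ hmem a ha
    have hc : c ∈ F := hmem c (by simp)
    rcases eq_or_ne l' [] with rfl | hl'
    · simpa [brFold_singleton] using br_span_single br F ha hc
    · have hmem' : ∀ x ∈ l', x ∈ F := fun x hx => hmem x (by simp [hx])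
      obtain ⟨y, ys, rfl⟩ := List.exists_cons_of_ne_nil hl'
      rw [brFold_cons_concat]
      set W := Submodule.span ℝ (Mono br F) with hW
      set Bm := brFold br (y :: ys) with hBm
      have e1 : br a (br Bm c) = br (br a Bm) c + br Bm (br a c) := hjac a Bm c
      rw [e1]
      have h2 : br a Bm ∈ W := ih (by simp) hmem' a ha
      have t1 : br (br a Bm) c ∈ W := br_span_single br F h2 hc
      have h3 : br a c ∈ W := br_span_single br F ha hc
      have t2 : br Bm (br a c) ∈ W := by
        rw [br_skew br halt Bm (br a c)]
        exact Submodule.neg_mem _ (ih (by simp) hmem' (br a c) h3)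
      exact Submodule.add_mem _ t1 t2

lemma br_span_closed (halt : ∀ x : H, br x x = 0)
    (hjac : ∀ x y z : H, br x (br y z) = br (br x y) z + br y (br x z))
    (F : Set H) {a b : H} (ha : a ∈ Submodule.span ℝ (Mono br F))
    (hb : b ∈ Submodule.span ℝ (Mono br F)) :
    br a b ∈ Submodule.span ℝ (Mono br F) := by
  refine Submodule.span_induction (p := fun z _ => br a z ∈ Submodule.span ℝ (Mono br F))
    ?_ ?_ ?_ ?_ hb
  · rintro z ⟨l, hl1, hl2, rfl⟩
    exact br_span_mono_list br halt hjac F l hl1 hl2 a ha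
  · simp only [map_zero]; exact Submodule.zero_mem _
  · intro u v _ _ hu hv
    simp only [map_add]; exact Submodule.add_mem _ hu hv
  · intro c u _ hu
    simp only [map_smul]; exact Submodule.smul_mem _ _ hu

lemma brFold_foldl_zero (l : List H) : l.foldl (fun a c => br a c) 0 = 0 := by
  induction l with
  | nil => rfl
  | cons x xs ih => simpa [List.foldl_cons, map_zero] using ih

lemma brFold_zero_of_long {r : ℕ}
    (hnil : ∀ (x : H) (l : List H), l.length = r → brFold br (x :: l) = 0)
    (l : List H) (hlen : r < l.length) : brFold br l = 0 := by
  obtain ⟨x, xs, rfl⟩ := List.exists_cons_of_ne_nil (l := l) (by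
    intro h; subst h; simp at hlen)
  have hxs : r ≤ xs.length := by simpa using Nat.lt_succ_iff.mp (by simpa using hlen)
  have hsplit : xs = xs.take r ++ xs.drop r := (List.take_append_drop r xs).symm
  have h1 : brFold br (x :: xs.take r) = 0 :=
    hnil x (xs.take r) (by simp [List.length_take, Nat.min_eq_left hxs])
  show brFold br (x :: xs) = 0
  rw [show (x :: xs) = (x :: xs.take r) ++ xs.drop r by rw [List.cons_append, ← hsplit]]
  show (List.take r xs ++ List.drop r xs).foldl (fun a c => br a c) x = 0
  rw [List.foldl_append]
  have h1' : (xs.take r).foldl (fun a c => br a c) x = 0 := h1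
  rw [h1']
  exact brFold_foldl_zero br _

lemma finite_lists (F : Set H) (hF : F.Finite) :
    ∀ n : ℕ, {l : List H | l.length ≤ n ∧ ∀ x ∈ l, x ∈ F}.Finite := by
  intro n
  induction n with
  | zero =>
    refine Set.Finite.subset (Set.finite_singleton []) ?_
    rintro l ⟨h1, _⟩
    simp [List.length_eq_zero_iff.mp (Nat.le_zero.mp h1)]
  | succ n ih =>
    refine Set.Finite.subset
      (Set.Finite.insert [] (((hF.prod ih).image fun p => p.1 :: p.2))) ?_
    rintro l ⟨h1, h2⟩
    rcases l with _ | ⟨x, xs⟩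
    · exact Set.mem_insert _ _
    · refine Set.mem_insert_of_mem _ ⟨(x, xs), ⟨h2 x (by simp), ?_, ?_⟩, rfl⟩
      · exact by simpa using h1
      · exact fun z hz => h2 z (by simp [hz])

lemma mono_findim (F : Set H) {r : ℕ}
    (hnil : ∀ (x : H) (l : List H), l.length = r → brFold br (x :: l) = 0) :
    Mono br F ⊆ insert 0 (brFold br '' {l : List H | l.length ≤ r ∧ ∀ x ∈ l, x ∈ F}) := by
  rintro z ⟨l, hl1, hl2, rfl⟩
  rcases le_or_gt l.length r with h | h
  · exact Set.mem_insert_of_mem _ ⟨l, ⟨h, hl2⟩, rfl⟩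
  · rw [brFold_zero_of_long br hnil l h]
    exact Set.mem_insert _ _

end Algebra

/-- Given an orthogonal projection `π₀` onto a finite-dimensional subspace and
a C¹ path `φ` with `φ(0) = 0`, there is an increasing sequence `(π_n)` of orthogonal projections
onto finite-dimensional Lie subalgebras of `H`, each containing the range of `π₀`, converging
strongly to the identity, with `ℓ(π_n ∘ φ) → ℓ(φ)`. -/
theorem length_approximation_by_projections
    {H : Type*} [NormedAddCommGroup H] [InnerProductSpace ℝ H] [CompleteSpace H]
    (br : H →ₗ[ℝ] H →ₗ[ℝ] H)
    (hcont : Continuous fun p : H × H => br p.1 p.2)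
    (halt : ∀ x : H, br x x = 0)
    (hjac : ∀ x y z : H, br x (br y z) = br (br x y) z + br y (br x z))
    (e : HilbertBasis ℕ ℝ H)
    (hHS : Summable fun p : ℕ × ℕ => ‖br (e p.1) (e p.2)‖ ^ 2)
    (r : ℕ)
    (hnil : ∀ (x : H) (l : List H), l.length = r → brFold br (x :: l) = 0)
    (π₀ : H →L[ℝ] H) (hπ₀ : IsOrthProj π₀)
    (hfin₀ : FiniteDimensional ℝ (LinearMap.range (π₀ : H →ₗ[ℝ] H)))
    (φ : ℝ → H) (hφ : ContDiff ℝ 1 φ) (hφ0 : φ 0 = 0) :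
    ∃ π : ℕ → (H →L[ℝ] H),
      (∀ n, IsOrthProj (π n)) ∧
      (∀ n, FiniteDimensional ℝ (LinearMap.range (π n : H →ₗ[ℝ] H))) ∧
      (∀ n, ∀ x y : H, x ∈ LinearMap.range (π n : H →ₗ[ℝ] H) → y ∈ LinearMap.range (π n : H →ₗ[ℝ] H) →
        br x y ∈ LinearMap.range (π n : H →ₗ[ℝ] H)) ∧
      (∀ n, LinearMap.range (π₀ : H →ₗ[ℝ] H) ≤ LinearMap.range (π n : H →ₗ[ℝ] H)) ∧
      (∀ n, LinearMap.range (π n : H →ₗ[ℝ] H) ≤ LinearMap.range (π (n + 1) : H →ₗ[ℝ] H)) ∧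
      (∀ x : H, Filter.Tendsto (fun n => π n x) Filter.atTop (nhds x)) ∧
      Filter.Tendsto (fun n => pathLength r br fun s => π n (φ s)) Filter.atTop
        (nhds (pathLength r br φ)) := by
  classical
  obtain ⟨Cb, hCb0, hCb⟩ := bilin_bound br hcont
  set B : H →L[ℝ] H →L[ℝ] H := LinearMap.mkContinuous₂ br Cb hCb with hBdef
  have hB : ∀ x y : H, B x y = br x y := fun x y => rfl
  -- finite generating sets
  have hfg : (LinearMap.range (π₀ : H →ₗ[ℝ] H)).FG := (Submodule.fg_iff_finiteDimensional _).2 hfin₀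
  obtain ⟨S, hS⟩ := hfg
  set F : ℕ → Set H := fun n => ↑S ∪ ⇑e '' Set.Iic n with hFdef
  have hFfin : ∀ n, (F n).Finite := fun n => S.finite_toSet.union ((Set.finite_Iic n).image e)
  have hFmono : ∀ {n m : ℕ}, n ≤ m → F n ⊆ F m := by
    intro n m h
    exact Set.union_subset_union_right _ (Set.image_mono (Set.Iic_subset_Iic.2 h))
  set W : ℕ → Submodule ℝ H := fun n => Submodule.span ℝ (Mono br (F n)) with hWdef
  have hWmono : ∀ {n m : ℕ}, n ≤ m → W n ≤ W m := fun h =>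
    Submodule.span_mono (mono_mono br (hFmono h))
  have hWfin : ∀ n, FiniteDimensional ℝ (W n) := by
    intro n
    have h1 : Mono br (F n)
        ⊆ insert 0 (brFold br '' {l : List H | l.length ≤ r ∧ ∀ x ∈ l, x ∈ F n}) :=
      mono_findim br (F n) hnil
    have h2 : (insert (0:H)
        (brFold br '' {l : List H | l.length ≤ r ∧ ∀ x ∈ l, x ∈ F n})).Finite :=
      ((finite_lists (F n) (hFfin n) r).image _).insert 0
    haveI := FiniteDimensional.span_of_finite ℝ h2
    exact Submodule.finiteDimensional_of_le (Submodule.span_mono h1)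
  let π : ℕ → H →L[ℝ] H := fun n =>
    letI := hWfin n
    (W n).subtypeL.comp ((W n).orthogonalProjectionOnto)
  have hrange : ∀ n, LinearMap.range (π n : H →ₗ[ℝ] H) = W n := by
    intro n
    letI := hWfin n
    apply le_antisymm
    · rintro x ⟨y, rfl⟩
      exact (((W n).orthogonalProjectionOnto) y).2
    · intro x hx
      refine ⟨x, ?_⟩
      show ((W n).subtypeL.comp ((W n).orthogonalProjectionOnto)) x = x
      simp only [ContinuousLinearMap.coe_comp', Function.comp_apply,
        Submodule.subtypeL_apply]
      exact Submodule.starProjection_eq_self_iff.2 hx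
  have hmemim : ∀ n x, π n x ∈ W n := by
    intro n x
    letI := hWfin n
    exact (((W n).orthogonalProjectionOnto) x).2
  have hfix : ∀ n x, x ∈ W n → π n x = x := by
    intro n x hx
    letI := hWfin n
    show ((W n).subtypeL.comp ((W n).orthogonalProjectionOnto)) x = x
    simp only [ContinuousLinearMap.coe_comp', Function.comp_apply,
      Submodule.subtypeL_apply]
    exact Submodule.starProjection_eq_self_iff.2 hx
  have hcontr : ∀ n x, ‖π n x‖ ≤ ‖x‖ := by
    intro n x
    letI := hWfin n
    show ‖(((W n).orthogonalProjectionOnto x : W n) : H)‖ ≤ ‖x‖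
    calc ‖(((W n).orthogonalProjectionOnto x : W n) : H)‖
        = ‖(W n).orthogonalProjectionOnto x‖ := rfl
      _ ≤ ‖(W n).orthogonalProjectionOnto‖ * ‖x‖ := ((W n).orthogonalProjectionOnto).le_opNorm x
      _ ≤ 1 * ‖x‖ :=
          mul_le_mul_of_nonneg_right (Submodule.orthogonalProjectionOnto_norm_le _) (norm_nonneg _)
      _ = ‖x‖ := one_mul _
  have hstrong : ∀ x : H, Filter.Tendsto (fun n => π n x) Filter.atTop (nhds x) := by
    intro x
    rw [Metric.tendsto_atTop]
    intro ε hε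
    have hx : x ∈ closure ((Submodule.span ℝ (Set.range ⇑e) : Submodule ℝ H) : Set H) := by
      have h1 : x ∈ (Submodule.span ℝ (Set.range ⇑e)).topologicalClosure := by
        rw [e.dense_span]; trivial
      rwa [← Submodule.topologicalClosure_coe]
    obtain ⟨y, hy, hxy⟩ := Metric.mem_closure_iff.1 hx ε hε
    obtain ⟨t, hts, hyt⟩ := Submodule.mem_span_finite_of_mem_span hy
    set ind : H → ℕ := fun z => if h : ∃ i, e i = z then h.choose else 0 with hind
    set N := t.sup ind with hN
    have ht : (↑t : Set H) ⊆ ⇑e '' Set.Iic N := by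
      intro z hz
      have hze : ∃ i, e i = z := by
        rcases hts hz with ⟨i, hi⟩; exact ⟨i, hi⟩
      refine ⟨ind z, ?_, ?_⟩
      · show ind z ≤ N
        exact Finset.le_sup hz
      · show e (ind z) = z
        rw [hind]; simp only [dif_pos hze]; exact hze.choose_spec
    have hyW : ∀ n, N ≤ n → y ∈ W n := by
      intro n hn
      have h1 : y ∈ Submodule.span ℝ (⇑e '' Set.Iic N) :=
        Submodule.span_mono ht hyt
      have h2 : Submodule.span ℝ (⇑e '' Set.Iic N) ≤ W n := by
        refine le_trans ?_ (hWmono hn)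
        refine Submodule.span_le.2 fun z hz => Submodule.subset_span ?_
        exact subset_mono br (F N) (Set.mem_union_right _ hz)
      exact h2 h1
    refine ⟨N, fun n hn => ?_⟩
    letI := hWfin n
    have hmin : ‖x - π n x‖ ≤ ‖x - y‖ := by
      show ‖x - (((W n).orthogonalProjectionOnto x : W n) : H)‖ ≤ ‖x - y‖
      rw [show ‖x - (((W n).orthogonalProjectionOnto x : W n) : H)‖ = ⨅ z : W n, ‖x - (z : H)‖ from
        Submodule.starProjection_minimal x]
      have hbd : BddBelow (Set.range fun z : W n => ‖x - (z : H)‖) := by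
        refine ⟨0, ?_⟩
        rintro w ⟨z, rfl⟩
        positivity
      exact ciInf_le hbd (⟨y, hyW n hn⟩ : W n)
    calc dist (π n x) x = ‖x - π n x‖ := by rw [dist_eq_norm, norm_sub_rev]
      _ ≤ ‖x - y‖ := hmin
      _ = dist x y := (dist_eq_norm _ _).symm
      _ < ε := hxy
  have hproj : ∀ n, IsOrthProj (π n) := by
    intro n
    constructor
    · intro x
      exact hfix n (π n x) (hmemim n x)
    · intro x y
      letI := hWfin n
      exact Submodule.inner_starProjection_left_eq_right (W n) x y
  -- Analysis part
  have φc : Continuous φ := hφ.continuous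
  have φ'c : Continuous (deriv φ) := hφ.continuous_deriv le_rfl
  have hφdiff : Differentiable ℝ φ := hφ.differentiable one_ne_zero
  set Ψ : H × H → H := fun p => bchMul r br p.1 p.2 with hΨdef
  have Ψcd : ContDiff ℝ (⊤ : ℕ∞) Ψ := contDiff_bchMul br B hB r
  have Ψdiff : Differentiable ℝ Ψ := Ψcd.differentiable (by simp)
  have Dcont : Continuous (fderiv ℝ Ψ) := Ψcd.continuous_fderiv (by simp)
  have hslice : ∀ g y : H, HasFDerivAt (fun z : H => bchMul r br g z)
      ((fderiv ℝ Ψ (g, y)).comp (ContinuousLinearMap.inr ℝ H H)) y := by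
    intro g y
    have h1 : HasFDerivAt Ψ (fderiv ℝ Ψ (g, y)) (g, y) := (Ψdiff (g, y)).hasFDerivAt
    have h2 : HasFDerivAt (fun z : H => ((g, z) : H × H))
        (ContinuousLinearMap.inr ℝ H H) y :=
      (hasFDerivAt_const g y).prodMk (hasFDerivAt_id y)
    exact h1.comp y h2
  have hfdcomp : ∀ g y : H, fderiv ℝ (fun z : H => bchMul r br g z) y
      = (fderiv ℝ Ψ (g, y)).comp (ContinuousLinearMap.inr ℝ H H) :=
    fun g y => (hslice g y).fderiv
  set G : H × H → ℝ := fun q => ‖fderiv ℝ Ψ (-q.1, q.1) (((0 : H), q.2) : H × H)‖ with hGdef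
  have hGc : Continuous G := by
    have c1 : Continuous fun q : H × H => fderiv ℝ Ψ (-q.1, q.1) :=
      Dcont.comp ((continuous_fst.neg).prodMk continuous_fst)
    have c2 : Continuous fun q : H × H => (((0 : H), q.2) : H × H) :=
      continuous_const.prodMk continuous_snd
    exact (isBoundedBilinearMap_apply.continuous.comp (c1.prodMk c2)).norm
  have hlen : ∀ g : ℝ → H, pathLength r br g
      = ∫ s in (0:ℝ)..1, G (g s, deriv g s) := by
    intro g
    unfold pathLength
    apply intervalIntegral.integral_congr
    intro s _
    show ‖(fderiv ℝ (fun y => bchMul r br (-(g s)) y) (g s)) (deriv g s)‖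
        = G (g s, deriv g s)
    rw [hfdcomp (-(g s)) (g s)]
    rfl
  obtain ⟨M₁, hM₁⟩ := (isCompact_uIcc (a := (0:ℝ)) (b := 1)).exists_bound_of_continuousOn
    φc.continuousOn
  obtain ⟨M₂, hM₂⟩ := (isCompact_uIcc (a := (0:ℝ)) (b := 1)).exists_bound_of_continuousOn
    φ'c.continuousOn
  set M : ℝ := max M₁ (max M₂ 0) with hMdef
  have hM0 : 0 ≤ M := le_max_of_le_right (le_max_right _ _)
  have hMφ : ∀ s ∈ Set.uIcc (0:ℝ) 1, ‖φ s‖ ≤ M :=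
    fun s hs => (hM₁ s hs).trans (le_max_left _ _)
  have hMφ' : ∀ s ∈ Set.uIcc (0:ℝ) 1, ‖deriv φ s‖ ≤ M :=
    fun s hs => (hM₂ s hs).trans (le_max_of_le_right (le_max_left _ _))
  obtain ⟨K, hK0, hKlip⟩ := lipBall_bchMul br B hB r (M + 1)
  have hGb : ∀ g v : H, ‖g‖ ≤ M → G (g, v) ≤ K * ‖v‖ := by
    intro g v hg
    have hsl := hslice (-g) g
    have hDnorm : ‖(fderiv ℝ Ψ (-g, g)).comp (ContinuousLinearMap.inr ℝ H H)‖ ≤ K := by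
      refine hsl.le_of_lip' hK0 ?_
      filter_upwards [Metric.ball_mem_nhds g one_pos] with y hy
      have hyg : ‖y - g‖ < 1 := by rwa [← dist_eq_norm]
      have hyn : ‖y‖ ≤ M + 1 := by
        calc ‖y‖ = ‖g + (y - g)‖ := by rw [show g + (y - g) = y by abel]
          _ ≤ ‖g‖ + ‖y - g‖ := norm_add_le _ _
          _ ≤ M + 1 := add_le_add hg hyg.le
      have hp : ‖((-g, y) : H × H)‖ ≤ M + 1 := by
        rw [Prod.norm_def]
        exact max_le (by simpa [norm_neg] using hg.trans (by linarith)) hyn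
      have hq : ‖((-g, g) : H × H)‖ ≤ M + 1 := by
        rw [Prod.norm_def]
        exact max_le (by simpa [norm_neg] using hg.trans (by linarith))
          (hg.trans (by linarith))
      have hkey := hKlip (-g, y) (-g, g) hp hq
      have hsub : ‖((-g, y) : H × H) - (-g, g)‖ = ‖y - g‖ := by
        have h1 : ((-g, y) : H × H) - (-g, g) = ((0 : H), y - g) := by
          simp [Prod.ext_iff]
        rw [h1, Prod.norm_def]
        simp
      calc ‖(fun z : H => bchMul r br (-g) z) y - (fun z : H => bchMul r br (-g) z) g‖
          = ‖Ψ (-g, y) - Ψ (-g, g)‖ := rfl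
        _ ≤ K * ‖((-g, y) : H × H) - (-g, g)‖ := hkey
        _ = K * ‖y - g‖ := by rw [hsub]
    have hGeq : G (g, v)
        = ‖((fderiv ℝ Ψ (-g, g)).comp (ContinuousLinearMap.inr ℝ H H)) v‖ := rfl
    rw [hGeq]
    calc ‖((fderiv ℝ Ψ (-g, g)).comp (ContinuousLinearMap.inr ℝ H H)) v‖
        ≤ ‖(fderiv ℝ Ψ (-g, g)).comp (ContinuousLinearMap.inr ℝ H H)‖ * ‖v‖ :=
          ContinuousLinearMap.le_opNorm _ _
      _ ≤ K * ‖v‖ := mul_le_mul_of_nonneg_right hDnorm (norm_nonneg _)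
  have hderiv : ∀ n s, deriv (fun t => π n (φ t)) s = π n (deriv φ s) := fun n s =>
    (((π n).hasFDerivAt).comp_hasDerivAt s (hφdiff s).hasDerivAt).deriv
  refine ⟨π, hproj, ?_, ?_, ?_, ?_, hstrong, ?_⟩
  · intro n
    rw [hrange n]
    exact hWfin n
  · intro n x y hx hy
    rw [hrange n] at hx hy ⊢
    exact br_span_closed br halt hjac (F n) hx hy
  · intro n
    rw [hrange n, ← hS]
    refine Submodule.span_le.2 fun z hz => Submodule.subset_span ?_
    exact subset_mono br (F n) (Set.mem_union_left _ hz)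
  · intro n
    rw [hrange n, hrange (n + 1)]
    exact hWmono (Nat.le_succ n)
  · have heq1 : (fun n => pathLength r br fun s => π n (φ s))
        = fun n => ∫ s in (0:ℝ)..1, G (π n (φ s), π n (deriv φ s)) := by
      funext n
      rw [hlen]
      apply intervalIntegral.integral_congr
      intro s _
      show G ((π n) (φ s), deriv (fun t => (π n) (φ t)) s)
          = G ((π n) (φ s), (π n) (deriv φ s))
      rw [hderiv n s]
    rw [heq1, hlen φ]
    apply intervalIntegral.tendsto_integral_filter_of_dominated_convergence
      (bound := fun _ => K * M)
    · refine Filter.Eventually.of_forall fun n => Continuous.aestronglyMeasurable ?_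
      exact hGc.comp (((π n).continuous.comp φc).prodMk ((π n).continuous.comp φ'c))
    · refine Filter.Eventually.of_forall fun n => MeasureTheory.ae_of_all _ fun s hs => ?_
      have hs' : s ∈ Set.uIcc (0:ℝ) 1 := Set.uIoc_subset_uIcc hs
      have hπφ : ‖π n (φ s)‖ ≤ M := (hcontr n _).trans (hMφ s hs')
      have hπφ' : ‖π n (deriv φ s)‖ ≤ M := (hcontr n _).trans (hMφ' s hs')
      have hnn : 0 ≤ G (π n (φ s), π n (deriv φ s)) := norm_nonneg _
      rw [Real.norm_eq_abs, abs_of_nonneg hnn]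
      calc G (π n (φ s), π n (deriv φ s)) ≤ K * ‖π n (deriv φ s)‖ := hGb _ _ hπφ
        _ ≤ K * M := mul_le_mul_of_nonneg_left hπφ' hK0
    · exact intervalIntegrable_const
    · refine MeasureTheory.ae_of_all _ fun s _ => ?_
      have ht : Filter.Tendsto (fun n => (π n (φ s), π n (deriv φ s))) Filter.atTop
          (nhds (φ s, deriv φ s)) :=
        (hstrong (φ s)).prodMk_nhds (hstrong (deriv φ s))
      exact (hGc.continuousAt.tendsto).comp ht
end
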